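/- arXiv:2412.13449 — 4 statements merged into one kernel-verified Lean document; each statement's English description precedes it below -/
import Mathlib

section
/- Let E = (E, E, τ, d) be an f_ms-BG with Nakayama automorphism σ. If the group ⟨σ⟩ is admissible, i.e. each ⟨σ⟩-orbit of E meets each edge of E in at most one half-edge, then the quotient E/⟨σ⟩ is a modified Brauer graph with no double half-edges (a Brauer graph); if ⟨σ⟩ is not admissible, then E/⟨σ⟩ is a modified Brauer graph containing a double half-edge. -/
namespace FB

/-- The data of a Brauer `G`-set for `G = ⟨g⟩` infinite cyclic:
a `ℤ`-set `E` (where `act n` is the action of `g^n`), a subset `U`,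
an involution `tau` on `U` (encoded as a total map, junk outside `U`),
and a degree function `d`. -/
structure BrauerData where
  E : Type
  act : ℤ → E → E
  U : Set E
  tau : E → E
  d : E → ℕ

namespace BrauerData

/-- The Nakayama automorphism `σ(e) = g^(d e) · e`. -/
def sigma (B : BrauerData) (e : B.E) : B.E := B.act (B.d e) e

/-- The axioms making the data a Brauer `G`-set. -/
structure IsBrauer (B : BrauerData) : Prop where
  act_zero : ∀ e, B.act 0 e = e
  act_add : ∀ (m n : ℤ) (e : B.E), B.act (m + n) e = B.act m (B.act n e)
  dpos : ∀ e, 0 < B.d e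
  d_act : ∀ (n : ℤ) (e : B.E), B.d (B.act n e) = B.d e
  tau_mem : ∀ e ∈ B.U, B.tau e ∈ B.U
  tau_invol : ∀ e ∈ B.U, B.tau (B.tau e) = e
  sigma_mem : ∀ e, e ∈ B.U ↔ B.sigma e ∈ B.U
  tau_sigma : ∀ e ∈ B.U, B.tau (B.sigma e) = B.sigma (B.tau e)

end BrauerData

/-- The letters of walks: `g`, `g⁻¹`, `τ`. -/
inductive Step : Type
  | g : Step
  | ginv : Step
  | tau : Step
  deriving DecidableEq

namespace BrauerData

/-- Apply one step. -/
def stepFun (B : BrauerData) : Step → B.E → B.E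
  | Step.g, e => B.act 1 e
  | Step.ginv, e => B.act (-1) e
  | Step.tau, e => B.tau e

/-- Terminal of the walk starting at `e` with steps `l` (listed in order of application). -/
def endpt (B : BrauerData) : B.E → List Step → B.E
  | e, [] => e
  | e, s :: l => B.endpt (B.stepFun s e) l

/-- The condition for a list of steps from `e` to be a walk:
both endpoints of a `τ`-step must lie in `U`. -/
def IsValid (B : BrauerData) : B.E → List Step → Prop
  | _, [] => True
  | e, s :: l => (s = Step.tau → e ∈ B.U ∧ B.tau e ∈ B.U) ∧ B.IsValid (B.stepFun s e) l

/-- A Brauer `G`-set is connected if any two half-edges are joined by a walk. -/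
def Connected (B : BrauerData) : Prop :=
  ∀ x y : B.E, ∃ l : List Step, B.IsValid x l ∧ B.endpt x l = y

/-- A closed walk at `e`. -/
def Closed (B : BrauerData) (e : B.E) (l : List Step) : Prop :=
  B.IsValid e l ∧ B.endpt e l = e

theorem endpt_append (B : BrauerData) (e : B.E) (l₁ l₂ : List Step) :
    B.endpt e (l₁ ++ l₂) = B.endpt (B.endpt e l₁) l₂ := by
  induction l₁ generalizing e with
  | nil => rfl
  | cons s l ih => simpa [endpt] using ih (B.stepFun s e)

theorem isValid_append (B : BrauerData) (e : B.E) (l₁ l₂ : List Step) :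
    B.IsValid e (l₁ ++ l₂) ↔ B.IsValid e l₁ ∧ B.IsValid (B.endpt e l₁) l₂ := by
  induction l₁ generalizing e with
  | nil => simp [IsValid, endpt]
  | cons s l ih =>
    simp only [List.cons_append, IsValid, endpt, List.append_eq, ih]
    tauto

end BrauerData

/-- The walk `g^n` (as a list of steps). -/
def gSteps (n : ℤ) : List Step :=
  if 0 ≤ n then List.replicate n.toNat Step.g else List.replicate (-n).toNat Step.ginv

/-- The homotopy relation `≈` on walks of a Brauer `G`-set, relative to a common
source `e`.  It is the equivalence relation generated by (mh1), (mh2), (mh3). -/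
inductive Htp (B : BrauerData) : B.E → List Step → List Step → Prop
  | refl (e : B.E) (l : List Step) (h : B.IsValid e l) : Htp B e l l
  | symm {e : B.E} {l₁ l₂ : List Step} : Htp B e l₁ l₂ → Htp B e l₂ l₁
  | trans {e : B.E} {l₁ l₂ l₃ : List Step} :
      Htp B e l₁ l₂ → Htp B e l₂ l₃ → Htp B e l₁ l₃
  | gginv (e : B.E) : Htp B e [Step.g, Step.ginv] []
  | ginvg (e : B.E) : Htp B e [Step.ginv, Step.g] []
  | tautau (e : B.E) (h : e ∈ B.U) : Htp B e [Step.tau, Step.tau] []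
  | square (e : B.E) (h : e ∈ B.U) :
      Htp B e (List.replicate (B.d e) Step.g ++ [Step.tau])
              (Step.tau :: List.replicate (B.d (B.tau e)) Step.g)
  | post {e : B.E} {l₁ l₂ : List Step} (u : List Step) (h : Htp B e l₁ l₂)
      (hu : B.IsValid (B.endpt e l₁) u) : Htp B e (l₁ ++ u) (l₂ ++ u)
  | pre {l₁ l₂ : List Step} (e : B.E) (v : List Step) (hv : B.IsValid e v)
      (h : Htp B (B.endpt e v) l₁ l₂) : Htp B e (v ++ l₁) (v ++ l₂)

/-- Morphisms of Brauer `G`-sets. -/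
def IsMorphism (B B' : BrauerData) (f : B.E → B'.E) : Prop :=
  (∀ (n : ℤ) (e : B.E), f (B.act n e) = B'.act n (f e)) ∧
  (∀ e ∈ B.U, f e ∈ B'.U) ∧
  (∀ e ∈ B.U, f (B.tau e) = B'.tau (f e)) ∧
  (∀ e, B'.d (f e) = B.d e)

/-- Coverings of Brauer `G`-sets. -/
def IsCovering (B B' : BrauerData) (f : B.E → B'.E) : Prop :=
  (∀ (n : ℤ) (e : B.E), f (B.act n e) = B'.act n (f e)) ∧
  (∀ e, e ∈ B.U ↔ f e ∈ B'.U) ∧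
  (∀ e ∈ B.U, f (B.tau e) = B'.tau (f e)) ∧
  (∀ e, B'.d (f e) = B.d e)

/-- Isomorphisms of Brauer `G`-sets: invertible morphisms whose inverse is a morphism. -/
def IsIsoBrauer (B B' : BrauerData) : Prop :=
  ∃ (f : B.E → B'.E) (h : B'.E → B.E), IsMorphism B B' f ∧ IsMorphism B' B h ∧
    (∀ x, h (f x) = x) ∧ (∀ y, f (h y) = y)

/-- Closed walks at a basepoint. -/
def ClosedWalk (B : BrauerData) (e : B.E) : Type := {l : List Step // B.Closed e l}

/-- Composition (concatenation) of closed walks. -/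
def ClosedWalk.comp {B : BrauerData} {e : B.E} (w v : ClosedWalk B e) :
    ClosedWalk B e :=
  ⟨w.1 ++ v.1, by
    obtain ⟨hw1, hw2⟩ := w.2
    obtain ⟨hv1, hv2⟩ := v.2
    refine ⟨?_, ?_⟩
    · rw [B.isValid_append]
      exact ⟨hw1, by rw [hw2]; exact hv1⟩
    · rw [B.endpt_append, hw2, hv2]⟩

/-- The fundamental group `Π_m(E, e)` of a Brauer `G`-set: homotopy classes of
closed walks at `e` (as a set; the group structure is given by `ClosedWalk.comp`). -/
def Pi1 (B : BrauerData) (e : B.E) : Type :=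
  Quot (fun w v : ClosedWalk B e => Htp B e w.1 v.1)

/-- Walks from `x` to `y`. -/
def Walks (B : BrauerData) (x y : B.E) : Type :=
  {l : List Step // B.IsValid x l ∧ B.endpt x l = y}

/-- Composition (concatenation) of walks. -/
def Walks.comp {B : BrauerData} {x y z : B.E} (u : Walks B x y) (v : Walks B y z) :
    Walks B x z :=
  ⟨u.1 ++ v.1, by
    obtain ⟨hu1, hu2⟩ := u.2
    obtain ⟨hv1, hv2⟩ := v.2
    refine ⟨?_, ?_⟩
    · rw [B.isValid_append]
      exact ⟨hu1, by rw [hu2]; exact hv1⟩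
    · rw [B.endpt_append, hu2, hv2]⟩

/-- Hom-sets of the fundamental groupoid `Π_m(E, A)`: homotopy classes of walks
from `x` to `y`. -/
def WalkCls (B : BrauerData) (x y : B.E) : Type :=
  Quot (fun u v : Walks B x y => Htp B x u.1 v.1)

/-- Composition in the fundamental groupoid. -/
def WalkCls.comp {B : BrauerData} {x y z : B.E} :
    WalkCls B x y → WalkCls B y z → WalkCls B x z := by
  refine Quot.lift (fun u => Quot.lift
      (fun v : Walks B y z => Quot.mk _ (u.comp v)) ?_) ?_
  · intro v₁ v₂ hv
    apply Quot.sound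
    show Htp B x (u.1 ++ v₁.1) (u.1 ++ v₂.1)
    refine Htp.pre x u.1 u.2.1 ?_
    rw [u.2.2]
    exact hv
  · intro u₁ u₂ hu
    funext v
    induction v using Quot.ind with
    | _ v =>
      show Quot.mk _ (u₁.comp v) = Quot.mk _ (u₂.comp v)
      apply Quot.sound
      show Htp B x (u₁.1 ++ v.1) (u₂.1 ++ v.1)
      refine Htp.post v.1 hu ?_
      rw [u₁.2.2]
      exact v.2.1

/-- `r` is the order of the Nakayama automorphism. -/
def IsOrderOf (B : BrauerData) (r : ℕ) : Prop :=
  0 < r ∧ (∀ x, B.sigma^[r] x = x) ∧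
    ∀ j : ℕ, 0 < j → (∀ x, B.sigma^[j] x = x) → r ≤ j

/-- The reduced homotopy relation `≈'` (relative to the order `r` of the Nakayama
automorphism): `w ≈' v` iff `w ≈ (t w | g^(k·r·d(t w)) | t v) v` for some `k : ℤ`. -/
def RedHtp (B : BrauerData) (r : ℕ) (e : B.E) (l₁ l₂ : List Step) : Prop :=
  ∃ k : ℤ, Htp B e l₁ (l₂ ++ gSteps (k * (r : ℤ) * (B.d (B.endpt e l₁) : ℤ)))

/-- One step of the `⟨σ⟩`-orbit relation. -/
def sigmaRel (B : BrauerData) (x y : B.E) : Prop := B.sigma x = y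

/-- One step of the `G`-orbit (vertex) relation. -/
def vertexRel (B : BrauerData) (x y : B.E) : Prop := B.act 1 x = y

/-- Vertices of a Brauer `G`-set: the `G`-orbits. -/
def VertexQuot (B : BrauerData) : Type := Quot (vertexRel B)

/-- Edges of a Brauer `G`-set: pairs `{e, τ e}` with `e ∈ U`, `τ e ≠ e`. -/
def EdgeQuot (B : BrauerData) : Type :=
  Quot (fun a b : {e : B.E // e ∈ B.U ∧ B.tau e ≠ e} => B.tau a.1 = b.1)

/-- Every vertex is finite and has integral f-degree. -/
def IntegralFDegree (B : BrauerData) : Prop :=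
  ∀ e : B.E, ∃ m : ℕ, 0 < m ∧ B.act m e = e ∧
    (∀ j : ℕ, 0 < j → B.act j e = e → m ≤ j) ∧ m ∣ B.d e

/-- The group `⟨σ⟩` is admissible: no `⟨σ⟩`-orbit contains both half-edges of an edge. -/
def SigmaAdmissible (B : BrauerData) : Prop :=
  ∀ e : B.E, ¬ Relation.EqvGen (sigmaRel B) e (B.tau e)

/-- The quotient `E/⟨σ⟩` of an `f_ms`-BG by the group generated by its
Nakayama automorphism. -/
def sigmaQuot (B : BrauerData) (hB : B.IsBrauer) (hU : B.U = Set.univ) : BrauerData where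
  E := Quot (sigmaRel B)
  act := fun n => Quot.lift (fun x => Quot.mk (sigmaRel B) (B.act n x))
    (fun x y hxy => by
      apply Quot.sound
      unfold sigmaRel at *
      subst hxy
      show B.sigma (B.act n x) = B.act n (B.sigma x)
      unfold BrauerData.sigma
      rw [hB.d_act, ← hB.act_add, ← hB.act_add, add_comm])
  U := Quot.mk (sigmaRel B) '' B.U
  tau := Quot.lift (fun x => Quot.mk (sigmaRel B) (B.tau x))
    (fun x y hxy => by
      apply Quot.sound
      unfold sigmaRel at *
      subst hxy
      show B.sigma (B.tau x) = B.tau (B.sigma x)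
      exact (hB.tau_sigma x (by rw [hU]; trivial)).symm)
  d := Quot.lift B.d
    (fun x y hxy => by
      unfold sigmaRel at hxy
      subst hxy
      show B.d x = B.d (B.sigma x)
      unfold BrauerData.sigma
      rw [hB.d_act])

open Classical in
/-- The quotient `E/Π` of a Brauer `G`-set by a group `Π` of automorphisms
(given by a group `Γ` acting by automorphisms via `ρ`). -/
noncomputable def quotData (B : BrauerData) (Γ : Type) [Group Γ]
    (ρ : Γ →* Equiv.Perm B.E) (hρ : ∀ γ : Γ, IsMorphism B B (ρ γ)) : BrauerData where
  E := Quot (fun x y : B.E => ∃ γ : Γ, ρ γ x = y)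
  act := fun n => Quot.lift (fun x => Quot.mk _ (B.act n x))
    (fun x y hxy => by
      obtain ⟨γ, hγ⟩ := hxy
      exact Quot.sound ⟨γ, by rw [(hρ γ).1 n x, hγ]⟩)
  U := Quot.mk _ '' B.U
  tau := Quot.lift
    (fun x => if x ∈ B.U then Quot.mk _ (B.tau x) else Quot.mk _ x)
    (fun x y hxy => by
      obtain ⟨γ, hγ⟩ := hxy
      try dsimp only
      by_cases hx : x ∈ B.U
      · have hy : y ∈ B.U := hγ ▸ (hρ γ).2.1 x hx
        rw [if_pos hx, if_pos hy]
        exact Quot.sound ⟨γ, by rw [(hρ γ).2.2.1 x hx, hγ]⟩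
      · have hy : y ∉ B.U := by
          intro hy
          apply hx
          have h1 : ρ γ⁻¹ y ∈ B.U := (hρ γ⁻¹).2.1 y hy
          have h2 : ρ γ⁻¹ y = x := by
            rw [← hγ, ← Equiv.Perm.mul_apply, ← map_mul, inv_mul_cancel, map_one,
              Equiv.Perm.one_apply]
          rwa [h2] at h1
        rw [if_neg hx, if_neg hy]
        exact Quot.sound ⟨γ, hγ⟩)
  d := Quot.lift B.d
    (fun x y hxy => by
      obtain ⟨γ, hγ⟩ := hxy
      rw [← hγ, (hρ γ).2.2.2 x])

open Classical in
/-- The double cover `Ê` of a Brauer `G`-set: two copies of `E`, with the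
involution exchanging the copies at the fixed points of `τ`. -/
noncomputable def hatData (B : BrauerData) : BrauerData where
  E := B.E × Bool
  act := fun n p => (B.act n p.1, p.2)
  U := {p | p.1 ∈ B.U}
  tau := fun p => if B.tau p.1 = p.1 then (p.1, !p.2) else (B.tau p.1, p.2)
  d := fun p => B.d p.1

section Restrict

variable (B : BrauerData) (hB : B.IsBrauer) (C : Set B.E)
  (hC : ∀ e : B.E, e ∈ C ↔ B.act (B.d e) e ∈ C)

open Classical in
/-- The first-return map forwards, on `E ∖ C`. -/
noncomputable def restrictFwd (x : {x : B.E // x ∉ C}) : {x : B.E // x ∉ C} :=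
  have hex : ∃ N : ℕ, 0 < N ∧ B.act N x.1 ∉ C :=
    ⟨B.d x.1, hB.dpos x.1, fun hc => x.2 ((hC x.1).mpr hc)⟩
  ⟨B.act (Nat.find hex) x.1, (Nat.find_spec hex).2⟩

open Classical in
/-- The first-return map backwards, on `E ∖ C`. -/
noncomputable def restrictBwd (x : {x : B.E // x ∉ C}) : {x : B.E // x ∉ C} :=
  have hex : ∃ N : ℕ, 0 < N ∧ B.act (-(N : ℤ)) x.1 ∉ C := by
    refine ⟨B.d x.1, hB.dpos x.1, fun hc => x.2 ?_⟩
    have h1 : B.act (B.d (B.act (-(B.d x.1 : ℤ)) x.1)) (B.act (-(B.d x.1 : ℤ)) x.1) ∈ C :=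
      (hC _).mp hc
    rw [hB.d_act, ← hB.act_add] at h1
    simpa [hB.act_zero] using h1
  ⟨B.act (-(Nat.find hex : ℤ)) x.1, (Nat.find_spec hex).2⟩

open Classical in
/-- The Brauer `G`-set structure on `E' = E ∖ C` (for `C ⊆ E ∖ U` stable under `σ`):
`g` acts by the first-return map, and the degree is corrected by the number of
deleted points passed. -/
noncomputable def restrictData (hCU : ∀ e ∈ C, e ∉ B.U) : BrauerData where
  E := {x : B.E // x ∉ C}
  act := fun n x =>
    if 0 ≤ n then (restrictFwd B hB C hC)^[n.toNat] x
    else (restrictBwd B hB C hC)^[(-n).toNat] x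
  U := {x | x.1 ∈ B.U}
  tau := fun x =>
    if h : x.1 ∈ B.U then ⟨B.tau x.1, fun hc => hCU _ hc (hB.tau_mem _ h)⟩ else x
  d := fun x => B.d x.1 - ((Finset.Ico 1 (B.d x.1)).filter fun i => B.act i x.1 ∈ C).card

end Restrict

section Lines

/-- The data of a doubly infinite walk. -/
structure Line (B : BrauerData) where
  pt : ℤ → B.E
  st : ℤ → Step

/-- The line condition: `pt i = (st i) (pt (i-1))`, and both endpoints of a
`τ`-step lie in `U`. -/
def Line.IsLine {B : BrauerData} (l : Line B) : Prop :=
  ∀ i : ℤ, (l.st i = Step.tau → l.pt (i - 1) ∈ B.U ∧ l.pt i ∈ B.U) ∧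
    l.pt i = B.stepFun (l.st i) (l.pt (i - 1))

/-- The `n`-th translate of a line. -/
def Line.translate {B : BrauerData} (l : Line B) (n : ℤ) : Line B :=
  ⟨fun i => l.pt (i + n), fun i => l.st (i + n)⟩

/-- The inverse of a step. -/
def Step.inv : Step → Step
  | Step.g => Step.ginv
  | Step.ginv => Step.g
  | Step.tau => Step.tau

/-- The inverse of a line. -/
def Line.inv {B : BrauerData} (l : Line B) : Line B :=
  ⟨fun i => l.pt (-i), fun i => (l.st (1 - i)).inv⟩

/-- A band: a periodic line of the alternating form
`⋯ τ g^{k_i} τ g^{-l_i} τ g^{k_{i+1}} ⋯` with `0 < k_i < d(e_i)`, `0 < l_i < d(h_i)`. -/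
def Line.IsBand {B : BrauerData} (l : Line B) : Prop :=
  l.IsLine ∧
  (∃ n : ℤ, 0 < n ∧ l.translate n = l) ∧
  (∃ i : ℤ, l.st i = Step.tau) ∧
  (∀ i : ℤ, l.st i = Step.tau → l.st (i + 1) ≠ Step.tau) ∧
  (∀ i : ℤ, l.st i = Step.g → l.st (i + 1) = Step.g ∨ l.st (i + 1) = Step.tau) ∧
  (∀ i : ℤ, l.st i = Step.ginv → l.st (i + 1) = Step.ginv ∨ l.st (i + 1) = Step.tau) ∧
  (∀ i : ℤ, l.st i = Step.g → l.st (i + 1) = Step.tau → l.st (i + 2) = Step.ginv) ∧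
  (∀ i : ℤ, l.st i = Step.ginv → l.st (i + 1) = Step.tau → l.st (i + 2) = Step.g) ∧
  (∀ (i : ℤ) (j : ℕ), l.st i = Step.tau → 0 < j →
    (∀ m : ℕ, 0 < m → m ≤ j → l.st (i + m) ≠ Step.tau) → j < B.d (l.pt i))

/-- One step of the equivalence relation on bands: translation or inversion. -/
def BandRel (B : BrauerData) (l₁ l₂ : Line B) : Prop :=
  (∃ n : ℤ, l₂ = l₁.translate n) ∨ l₂ = l₁.inv

/-- The set of equivalence classes of bands. -/
def BandClasses (B : BrauerData) : Type :=
  Quot (fun l₁ l₂ : {l : Line B // l.IsBand} => BandRel B l₁.1 l₂.1)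

end Lines

section Special

/-- Tail of a special walk: blocks `g^i` separated by single `τ`'s, with
`0 < i < d` for the inner blocks and `0 ≤ i < d` for the last block. -/
inductive SpecialTail (B : BrauerData) : B.E → List Step → Prop
  | last (e : B.E) (i : ℕ) (h : i < B.d e) :
      SpecialTail B e (List.replicate i Step.g)
  | cons (e : B.E) (i : ℕ) (h0 : 0 < i) (h : i < B.d e)
      (hU : B.act i e ∈ B.U) (hU' : B.tau (B.act i e) ∈ B.U) {l : List Step}
      (ht : SpecialTail B (B.tau (B.act i e)) l) :
      SpecialTail B e (List.replicate i Step.g ++ Step.tau :: l)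

/-- Special walks: `g^{i_k} τ g^{i_{k-1}} τ ⋯ τ g^{i_1} τ g^{i_0}` with
`0 ≤ i_0 < d(e_0)`, `0 ≤ i_k < d(e_k)` and `0 < i_l < d(e_l)` for `1 ≤ l ≤ k-1`. -/
inductive IsSpecial (B : BrauerData) : B.E → List Step → Prop
  | single (e : B.E) (i : ℕ) (h : i < B.d e) :
      IsSpecial B e (List.replicate i Step.g)
  | multi (e : B.E) (i : ℕ) (h : i < B.d e)
      (hU : B.act i e ∈ B.U) (hU' : B.tau (B.act i e) ∈ B.U) {l : List Step}
      (ht : SpecialTail B (B.tau (B.act i e)) l) :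
      IsSpecial B e (List.replicate i Step.g ++ Step.tau :: l)

end Special

end FB

namespace FB

section
variable {B : BrauerData}

private lemma iter_sigma (hB : B.IsBrauer) (n : ℕ) (x : B.E) :
    B.sigma^[n] x = B.act ((n : ℤ) * B.d x) x := by
  induction n with
  | zero => simpa using (hB.act_zero x).symm
  | succ n ih =>
    rw [Function.iterate_succ_apply', ih]
    show B.act (B.d (B.act ((n : ℤ) * B.d x) x)) _ = _
    rw [hB.d_act, ← hB.act_add]
    congr 1
    push_cast
    ring

private lemma eqvGen_of_pow (n : ℕ) (x : B.E) :
    Relation.EqvGen (sigmaRel B) x (B.sigma^[n] x) := by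
  induction n with
  | zero => exact Relation.EqvGen.refl x
  | succ n ih =>
    refine Relation.EqvGen.trans _ _ _ ih ?_
    rw [Function.iterate_succ_apply']
    exact Relation.EqvGen.rel _ _ rfl

private lemma eqvGen_iff (hB : B.IsBrauer) (x y : B.E) :
    Relation.EqvGen (sigmaRel B) x y ↔ ∃ k : ℤ, B.act (k * B.d x) x = y := by
  constructor
  · intro h
    induction h with
    | rel a b hab => exact ⟨1, by rw [one_mul]; exact hab⟩
    | refl a => exact ⟨0, by simpa using hB.act_zero a⟩
    | symm a b _ ih =>
      obtain ⟨k, hk⟩ := ih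
      have hd : B.d b = B.d a := by rw [← hk, hB.d_act]
      refine ⟨-k, ?_⟩
      rw [hd, ← hk, ← hB.act_add, show -k * (B.d a : ℤ) + k * B.d a = 0 by ring,
        hB.act_zero]
    | trans a b c _ _ ih1 ih2 =>
      obtain ⟨k, hk⟩ := ih1
      obtain ⟨k', hk'⟩ := ih2
      have hd : B.d b = B.d a := by rw [← hk, hB.d_act]
      refine ⟨k' + k, ?_⟩
      rw [← hk', hd, ← hk, ← hB.act_add]
      congr 1
      ring
  · rintro ⟨k, rfl⟩
    rcases le_or_gt 0 k with hk | hk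
    · have := eqvGen_of_pow (B := B) k.toNat x
      rwa [iter_sigma hB, Int.toNat_of_nonneg hk] at this
    · apply Relation.EqvGen.symm
      have := eqvGen_of_pow (B := B) (-k).toNat (B.act (k * B.d x) x)
      rwa [iter_sigma hB, hB.d_act, ← hB.act_add,
        show (((-k).toNat : ℤ) * B.d x + k * B.d x) = 0 by
          rw [Int.toNat_of_nonneg (by omega)]; ring,
        hB.act_zero] at this

end

/-- Let `E = (E,E,τ,d)` be an `f_ms`-BG with Nakayama automorphism
`σ`.  Then `E/⟨σ⟩` is a modified Brauer graph (a Brauer `G`-set with `U = E` of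
integral f-degree); it has no double half-edge (i.e. it is a Brauer graph) if `⟨σ⟩`
is admissible, and it contains a double half-edge if `⟨σ⟩` is not admissible. -/
theorem sigma_quotient_modified_brauer_graph (B : BrauerData) (hB : B.IsBrauer)
    (hU : B.U = Set.univ) (htau : ∀ e : B.E, B.tau e ≠ e) :
    ((sigmaQuot B hB hU).IsBrauer ∧ (sigmaQuot B hB hU).U = Set.univ ∧
      IntegralFDegree (sigmaQuot B hB hU)) ∧
    (SigmaAdmissible B →
      ∀ c ∈ (sigmaQuot B hB hU).U, (sigmaQuot B hB hU).tau c ≠ c) ∧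
    (¬ SigmaAdmissible B →
      ∃ c ∈ (sigmaQuot B hB hU).U, (sigmaQuot B hB hU).tau c = c) := by
  set Q := sigmaQuot B hB hU with hQ
  have hmk_act : ∀ (n : ℤ) (x : B.E),
      Q.act n (Quot.mk (sigmaRel B) x) = Quot.mk (sigmaRel B) (B.act n x) := fun _ _ => rfl
  have hmk_tau : ∀ x : B.E,
      Q.tau (Quot.mk (sigmaRel B) x) = Quot.mk (sigmaRel B) (B.tau x) := fun _ => rfl
  have hmk_d : ∀ x : B.E, Q.d (Quot.mk (sigmaRel B) x) = B.d x := fun _ => rfl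
  have hQU : Q.U = Set.univ := by
    apply Set.eq_univ_iff_forall.mpr
    intro c
    induction c using Quot.ind with
    | _ x => exact ⟨x, by rw [hU]; trivial, rfl⟩
  have hsig : ∀ x : B.E, Q.sigma (Quot.mk (sigmaRel B) x) = Quot.mk (sigmaRel B) x :=
    fun x => (Quot.sound (show sigmaRel B x (B.sigma x) from rfl)).symm
  refine ⟨⟨?_, ?_, ?_⟩, ?_, ?_⟩
  · -- IsBrauer
    constructor
    · intro c; induction c using Quot.ind with
      | _ x => rw [hmk_act, hB.act_zero]
    · intro m n c; induction c using Quot.ind with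
      | _ x => rw [hmk_act, hmk_act, hmk_act, hB.act_add]
    · intro c; induction c using Quot.ind with
      | _ x => exact hB.dpos x
    · intro n c; induction c using Quot.ind with
      | _ x => rw [hmk_act]; exact hB.d_act n x
    · intro c _; rw [hQU]; trivial
    · intro c _; induction c using Quot.ind with
      | _ x => rw [hmk_tau, hmk_tau, hB.tau_invol x (by rw [hU]; trivial)]
    · intro c; simp [hQU]
    · intro c _; induction c using Quot.ind with
      | _ x => rw [hsig x, hmk_tau, hsig (B.tau x)]
  · exact hQU
  · -- IntegralFDegree
    intro c
    induction c using Quot.ind with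
    | _ e =>
      have hD : (0 : ℤ) < (B.d e : ℤ) := by exact_mod_cast hB.dpos e
      set D : ℤ := (B.d e : ℤ) with hDdef
      let S : AddSubgroup ℤ :=
        { carrier := {m | ∃ k : ℤ, B.act (m + k * D) e = e}
          zero_mem' := ⟨0, by simpa using hB.act_zero e⟩
          add_mem' := by
            rintro a b ⟨k, hk⟩ ⟨k', hk'⟩
            refine ⟨k + k', ?_⟩
            rw [show a + b + (k + k') * D = (a + k * D) + (b + k' * D) by ring,
              hB.act_add, hk', hk]
          neg_mem' := by
            rintro a ⟨k, hk⟩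
            refine ⟨-k, ?_⟩
            have h := congrArg (B.act (-(a + k * D))) hk
            rw [← hB.act_add, neg_add_cancel, hB.act_zero] at h
            rw [show -a + -k * D = -(a + k * D) by ring]
            exact h.symm }
      have hDS : D ∈ S := ⟨-1, by rw [show D + (-1) * D = 0 by ring, hB.act_zero]⟩
      have key : ∀ m : ℤ, m ∈ S →
          Quot.mk (sigmaRel B) (B.act m e) = Quot.mk (sigmaRel B) e := by
        rintro m ⟨k, hk⟩
        rw [Quot.eq]
        apply Relation.EqvGen.symm
        rw [eqvGen_iff hB]
        refine ⟨-k, ?_⟩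
        have h := congrArg (B.act (-(k * D))) hk
        rw [← hB.act_add, show -(k * D) + (m + k * D) = m by ring] at h
        rw [show -k * D = -(k * D) by ring, ← h]
      have key2 : ∀ m : ℤ,
          Quot.mk (sigmaRel B) (B.act m e) = Quot.mk (sigmaRel B) e → m ∈ S := by
        intro m h
        rw [Quot.eq] at h
        replace h := h.symm
        rw [eqvGen_iff hB] at h
        obtain ⟨k, hk⟩ := h
        refine ⟨-k, ?_⟩
        rw [show m + -k * D = -(k * D) + m by ring, hB.act_add, ← hk, ← hB.act_add,
          neg_add_cancel, hB.act_zero]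
      obtain ⟨a, hSa⟩ := Int.subgroup_cyclic S
      have hmem : ∀ m : ℤ, m ∈ S ↔ a ∣ m := by
        intro m
        rw [hSa, AddSubgroup.mem_closure_singleton]
        constructor
        · rintro ⟨n, hn⟩; exact ⟨n, by rw [← hn, smul_eq_mul, mul_comm]⟩
        · rintro ⟨n, hn⟩; exact ⟨n, by rw [smul_eq_mul, hn, mul_comm]⟩
      have haD : a ∣ D := (hmem D).mp hDS
      have ha0 : a ≠ 0 := by rintro rfl; rw [zero_dvd_iff] at haD; omega
      refine ⟨a.natAbs, Int.natAbs_pos.mpr ha0, ?_, ?_, ?_⟩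
      · exact key _ ((hmem _).mpr (Int.dvd_natAbs.mpr dvd_rfl))
      · intro j hj hact
        have hjS : (j : ℤ) ∈ S := key2 _ hact
        have : (a.natAbs : ℤ) ∣ (j : ℤ) := Int.natAbs_dvd.mpr ((hmem _).mp hjS)
        have := Int.le_of_dvd (by exact_mod_cast hj) this
        exact_mod_cast this
      · have := Int.natAbs_dvd_natAbs.mpr haD
        exact (by simpa [hDdef] using this : a.natAbs ∣ B.d e)
  · -- admissible case
    intro hadm c _ heq
    induction c using Quot.ind with
    | _ x =>
      rw [hmk_tau] at heq
      have heq := Quot.eq.mp heq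
      exact hadm x heq.symm
  · -- non-admissible case
    intro hn
    unfold SigmaAdmissible at hn
    push_neg at hn
    obtain ⟨e, he⟩ := hn
    refine ⟨Quot.mk (sigmaRel B) e, by rw [hQU]; trivial, ?_⟩
    rw [hmk_tau]
    exact Quot.eq.mpr he.symm

end FB
end

section
/- Let m ≥ 1, a, b ≥ 0 be integers and n = a + b. Let E = (E, U, τ, d) be the Brauer G-set where E = {e, e₁, …, e_a, e', e_{a+1}, …, e_{a+b}} is a single G-orbit of size n+2 on which g acts cyclically in the listed order (g·e = e₁, …, g·e_a = e', g·e' = e_{a+1}, …, g·e_{a+b} = e; when a = 0, g·e = e'), U = E, τ(e) = e', τ(e') = e, τ(e_i) = e_i for all 1 ≤ i ≤ n, and d is constant equal to m(n+2) (so the unique vertex has f-degree m). Then the fundamental group Π_m(E, e) is isomorphic to F⟨x, y, z₁, …, zₙ⟩ / ⟨xᵐy = yxᵐ, xᵐz_i = z_i xᵐ (1 ≤ i ≤ n), z_i² = 1 (1 ≤ i ≤ n)⟩, the quotient of the free group on n+2 generators by the normal closure of these relations. -/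
namespace FB

open scoped Fin.IntCast in
/-- The modified Brauer graph of Lemma 3.?: a single vertex of f-degree `m` carrying
one edge `{e, e'}` and `n = a + b` double half-edges `e₁, …, e_{a+b}`, with the
cyclic `G`-action `e → e₁ → ⋯ → e_a → e' → e_{a+1} → ⋯ → e_{a+b} → e`.
We encode the half-edges by `Fin (a+b+2)`, with `e = 0`, `e' = a+1`,
`e_i = i` for `1 ≤ i ≤ a` and `e_{a+j} = a+1+j` for `1 ≤ j ≤ b`. -/
def wheelData (m a b : ℕ) : BrauerData where
  E := Fin (a + b + 2)
  act := fun n i => i + (n : Fin (a + b + 2))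
  U := Set.univ
  tau := fun i =>
    if i = (0 : Fin (a + b + 2)) then (⟨a + 1, by omega⟩ : Fin (a + b + 2))
    else if i = (⟨a + 1, by omega⟩ : Fin (a + b + 2)) then 0 else i
  d := fun _ => m * (a + b + 2)

/-- The relations `xᵐy = yxᵐ`, `xᵐz_i = z_i xᵐ`, `z_i² = 1` in the free group on
`x, y, z₁, …, z_n` (`n = a + b`), encoded on generators `Fin (n+2)` with
`x = 0`, `y = 1`, `z_i = i+2`. -/
def wheelRels (m a b : ℕ) : Set (FreeGroup (Fin (a + b + 2))) :=
  { w | w = FreeGroup.of (⟨0, by omega⟩ : Fin (a + b + 2)) ^ m *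
            FreeGroup.of (⟨1, by omega⟩ : Fin (a + b + 2)) *
            (FreeGroup.of (⟨0, by omega⟩ : Fin (a + b + 2)) ^ m)⁻¹ *
            (FreeGroup.of (⟨1, by omega⟩ : Fin (a + b + 2)))⁻¹ ∨
        (∃ i : Fin (a + b),
          w = FreeGroup.of (⟨0, by omega⟩ : Fin (a + b + 2)) ^ m *
              FreeGroup.of (⟨i.1 + 2, by omega⟩ : Fin (a + b + 2)) *
              (FreeGroup.of (⟨0, by omega⟩ : Fin (a + b + 2)) ^ m)⁻¹ *
              (FreeGroup.of (⟨i.1 + 2, by omega⟩ : Fin (a + b + 2)))⁻¹) ∨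
        (∃ i : Fin (a + b),
          w = FreeGroup.of (⟨i.1 + 2, by omega⟩ : Fin (a + b + 2)) *
              FreeGroup.of (⟨i.1 + 2, by omega⟩ : Fin (a + b + 2))) }
open scoped Fin.NatCast Fin.IntCast Fin.CommRing
attribute [reducible] wheelData
section Wheel
variable (m a b : ℕ)

-- basic lemmas
lemma wvalid : ∀ (l : List Step) (e : Fin (a+b+2)), (wheelData m a b).IsValid e l := by
  intro l
  induction l with
  | nil => intro e; trivial
  | cons s l ih => intro e; exact ⟨fun _ => ⟨trivial, trivial⟩, ih _⟩

lemma step_g (e : Fin (a+b+2)) : (wheelData m a b).stepFun Step.g e = e + 1 := by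
  show e + ((1:ℤ) : Fin (a+b+2)) = e + 1
  norm_num

lemma step_ginv (e : Fin (a+b+2)) : (wheelData m a b).stepFun Step.ginv e = e - 1 := by
  show e + ((-1:ℤ) : Fin (a+b+2)) = e - 1
  push_cast
  ring

lemma step_tau (e : Fin (a+b+2)) : (wheelData m a b).stepFun Step.tau e = (wheelData m a b).tau e := rfl

lemma d_eq (e : Fin (a+b+2)) : (wheelData m a b).d e = m * (a+b+2) := rfl

lemma tau_fix (e : Fin (a+b+2)) (h0 : e.1 ≠ 0) (h1 : e.1 ≠ a+1) : (wheelData m a b).tau e = e := by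
  show (if e = _ then _ else if e = _ then _ else e) = e
  rw [if_neg, if_neg]
  · exact fun h => h1 (by rw [h])
  · exact fun h => h0 (by rw [h]; simp)

lemma mk_zero_eq : (⟨0, by omega⟩ : Fin (a+b+2)) = (0 : Fin (a+b+2)) := by
  ext; simp

lemma tau_zero : (wheelData m a b).tau ⟨0, by omega⟩ = ⟨a+1, by omega⟩ := by
  show (if (⟨0, by omega⟩ : Fin (a+b+2)) = 0 then (⟨a+1, by omega⟩ : Fin (a+b+2))
      else if (⟨0, by omega⟩ : Fin (a+b+2)) = ⟨a+1, by omega⟩ then 0 else ⟨0, by omega⟩) = ⟨a+1, by omega⟩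
  rw [if_pos (mk_zero_eq a b)]

lemma tau_a1 : (wheelData m a b).tau ⟨a+1, by omega⟩ = ⟨0, by omega⟩ := by
  have h : (⟨a+1, by omega⟩ : Fin (a+b+2)) ≠ (0 : Fin (a+b+2)) := by
    intro h; have := congrArg Fin.val h; simp at this
  show (if (⟨a+1, by omega⟩ : Fin (a+b+2)) = 0 then (⟨a+1, by omega⟩ : Fin (a+b+2))
      else if (⟨a+1, by omega⟩ : Fin (a+b+2)) = ⟨a+1, by omega⟩ then 0 else ⟨a+1, by omega⟩) = ⟨0, by omega⟩
  rw [if_neg h, if_pos rfl, mk_zero_eq]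

lemma tau_invol (e : Fin (a+b+2)) : (wheelData m a b).tau ((wheelData m a b).tau e) = e := by
  by_cases h0 : e.1 = 0
  · have he : e = ⟨0, by omega⟩ := Fin.ext h0
    rw [he, tau_zero, tau_a1]
  by_cases h1 : e.1 = a+1
  · have he : e = ⟨a+1, by omega⟩ := Fin.ext h1
    rw [he, tau_a1, tau_zero]
  rw [tau_fix m a b e h0 h1, tau_fix m a b e h0 h1]

end Wheel
section Wheel2
variable (m a b : ℕ)

def repg (k : ℕ) : List Step := List.replicate k Step.g
def repi (k : ℕ) : List Step := List.replicate k Step.ginv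
def linv (l : List Step) : List Step := (l.map Step.inv).reverse

lemma repg_succ (k : ℕ) : repg (k+1) = Step.g :: repg k := rfl
lemma repg_succ' (k : ℕ) : repg (k+1) = repg k ++ [Step.g] := List.replicate_succ'
lemma repi_succ (k : ℕ) : repi (k+1) = Step.ginv :: repi k := rfl
lemma repg_add (j k : ℕ) : repg (j+k) = repg j ++ repg k := List.replicate_add _ _ _
lemma repi_add (j k : ℕ) : repi (j+k) = repi j ++ repi k := List.replicate_add _ _ _

lemma linv_repg (k : ℕ) : linv (repg k) = repi k := by
  simp [linv, repg, repi, List.map_replicate, List.reverse_replicate]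
  exact Or.inr rfl

lemma linv_repi (k : ℕ) : linv (repi k) = repg k := by
  simp [linv, repg, repi, List.map_replicate, List.reverse_replicate]
  exact Or.inr rfl

lemma linv_cons (s : Step) (l : List Step) : linv (s :: l) = linv l ++ [s.inv] := by
  simp [linv]

lemma step_inv_inv (s : Step) : s.inv.inv = s := by cases s <;> rfl

lemma linv_linv (l : List Step) : linv (linv l) = l := by
  simp [linv, List.map_reverse, List.map_map]
  have : Step.inv ∘ Step.inv = id := funext step_inv_inv
  rw [this, List.map_id]

lemma endpt_repg (k : ℕ) : ∀ (e : Fin (a+b+2)), (wheelData m a b).endpt e (repg k) = e + (k : Fin (a+b+2)) := by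
  induction k with
  | zero => intro e; simp [BrauerData.endpt, repg]
  | succ k ih =>
    intro e
    rw [repg_succ]
    show (wheelData m a b).endpt ((wheelData m a b).stepFun Step.g e) (repg k) = _
    rw [step_g, ih]
    push_cast
    ring

lemma endpt_repi (k : ℕ) : ∀ (e : Fin (a+b+2)), (wheelData m a b).endpt e (repi k) = e - (k : Fin (a+b+2)) := by
  induction k with
  | zero => intro e; simp [BrauerData.endpt, repi]
  | succ k ih =>
    intro e
    rw [repi_succ]
    show (wheelData m a b).endpt ((wheelData m a b).stepFun Step.ginv e) (repi k) = _
    rw [step_ginv, ih]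
    push_cast
    ring

-- Fin val lemmas
lemma val_add_one (p : Fin (a+b+2)) (h : p.1 + 1 < a+b+2) : (p + 1).1 = p.1 + 1 := by
  rw [Fin.add_def]
  show (p.1 + (1 : Fin (a+b+2)).1) % (a+b+2) = p.1 + 1
  have h1 : (1 : Fin (a+b+2)).1 = 1 := rfl
  rw [h1, Nat.mod_eq_of_lt h]

lemma val_last_add_one (p : Fin (a+b+2)) (h : p.1 = a+b+1) : (p + 1).1 = 0 := by
  rw [Fin.add_def]
  have h1 : (1 : Fin (a+b+2)).1 = 1 := rfl
  rw [h1, h]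
  simp

lemma val_sub_one (p : Fin (a+b+2)) (h : 1 ≤ p.1) : (p - 1).1 = p.1 - 1 := by
  rw [Fin.sub_def]
  show (a+b+2 - (1 : Fin (a+b+2)).1 + p.1) % (a+b+2) = p.1 - 1
  have h1 : (1 : Fin (a+b+2)).1 = 1 := rfl
  rw [h1]
  have hlt := p.isLt
  have heq : a+b+2 - 1 + p.1 = (p.1 - 1) + 1*(a+b+2) := by omega
  rw [heq, Nat.add_mul_mod_self_right, Nat.mod_eq_of_lt (by omega)]

lemma val_zero_sub_one (p : Fin (a+b+2)) (h : p.1 = 0) : (p - 1).1 = a+b+1 := by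
  rw [Fin.sub_def]
  show (a+b+2 - (1 : Fin (a+b+2)).1 + p.1) % (a+b+2) = a+b+1
  have h1 : (1 : Fin (a+b+2)).1 = 1 := rfl
  rw [h1, h]
  rw [Nat.mod_eq_of_lt (by omega)]
  omega

lemma val_add_nat (p : Fin (a+b+2)) (k : ℕ) (h : p.1 + k < a+b+2) :
    (p + (k : Fin (a+b+2))).1 = p.1 + k := by
  rw [Fin.add_def]
  show (p.1 + ((k:ℕ) : Fin (a+b+2)).1) % (a+b+2) = p.1 + k
  rw [Fin.val_natCast, Nat.mod_eq_of_lt (show k < a+b+2 by omega), Nat.mod_eq_of_lt h]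

lemma natCast_N : ((a+b+2 : ℕ) : Fin (a+b+2)) = 0 := by
  exact Fin.natCast_self _

lemma add_cast_mul_N (e : Fin (a+b+2)) (k : ℕ) : e + ((k * (a+b+2) : ℕ) : Fin (a+b+2)) = e := by
  rw [Nat.cast_mul, Fin.natCast_self, mul_zero, add_zero]

end Wheel2
section Wheel3
variable {m a b : ℕ}

lemma memU (e : Fin (a+b+2)) : e ∈ (wheelData m a b).U := Set.mem_univ e

lemma htp_refl (e : Fin (a+b+2)) (l : List Step) : Htp (wheelData m a b) e l l :=
  Htp.refl (B := wheelData m a b) e l (wvalid m a b l e)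

lemma htp_eq {e : Fin (a+b+2)} {l₁ l₂ : List Step} (h : l₁ = l₂) :
    Htp (wheelData m a b) e l₁ l₂ := h ▸ htp_refl e l₁

lemma htp_congr {e : Fin (a+b+2)} {l₁ l₂ l₁' l₂' : List Step} (h1 : l₁ = l₁') (h2 : l₂ = l₂')
    (h : Htp (wheelData m a b) e l₁ l₂) : Htp (wheelData m a b) e l₁' l₂' := h1 ▸ h2 ▸ h

lemma htp_pre {e : Fin (a+b+2)} (v : List Step) {l₁ l₂ : List Step}
    (h : Htp (wheelData m a b) ((wheelData m a b).endpt e v) l₁ l₂) :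
    Htp (wheelData m a b) e (v ++ l₁) (v ++ l₂) :=
  Htp.pre (B := wheelData m a b) e v (wvalid m a b v e) h

lemma htp_post {e : Fin (a+b+2)} (u : List Step) {l₁ l₂ : List Step}
    (h : Htp (wheelData m a b) e l₁ l₂) :
    Htp (wheelData m a b) e (l₁ ++ u) (l₂ ++ u) :=
  Htp.post (B := wheelData m a b) u h (wvalid m a b u _)

lemma stepFun_inv (s : Step) (e : Fin (a+b+2)) :
    (wheelData m a b).stepFun s.inv ((wheelData m a b).stepFun s e) = e := by
  cases s
  · show (wheelData m a b).stepFun Step.ginv _ = e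
    rw [step_g, step_ginv]
    exact add_sub_cancel_right e 1
  · show (wheelData m a b).stepFun Step.g _ = e
    rw [step_g, step_ginv]
    exact sub_add_cancel e 1
  · show (wheelData m a b).stepFun Step.tau _ = e
    rw [step_tau, step_tau, tau_invol]

lemma step_step_inv (s : Step) (e : Fin (a+b+2)) :
    Htp (wheelData m a b) e [s, s.inv] [] := by
  cases s
  · exact Htp.gginv (B := wheelData m a b) e
  · exact Htp.ginvg (B := wheelData m a b) e
  · exact Htp.tautau (B := wheelData m a b) e (memU e)

lemma htp_cancel : ∀ (l : List Step) (e : Fin (a+b+2)),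
    Htp (wheelData m a b) e (l ++ linv l) [] := by
  intro l
  induction l with
  | nil => intro e; exact htp_refl e []
  | cons s l ih =>
    intro e
    have h1 : Htp (wheelData m a b) ((wheelData m a b).stepFun s e) (l ++ linv l) [] := ih _
    have h2 := htp_post [s.inv] h1
    have h3 := htp_pre [s] h2
    have h4 : Htp (wheelData m a b) e ([s] ++ ((l ++ linv l) ++ [s.inv])) ([s] ++ ([] ++ [s.inv])) := h3
    refine Htp.trans (htp_congr ?_ ?_ h4) (step_step_inv s e)
    · rw [linv_cons]; simp
    · simp

lemma htp_cancel' (l : List Step) (e : Fin (a+b+2)) :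
    Htp (wheelData m a b) e (linv l ++ l) [] := by
  have h : Htp (wheelData m a b) e (linv l ++ linv (linv l)) [] := htp_cancel (linv l) e
  rwa [linv_linv] at h

lemma htp_sandwich {e : Fin (a+b+2)} (u v : List Step) {w₁ w₂ : List Step}
    (h : Htp (wheelData m a b) ((wheelData m a b).endpt e u) w₁ w₂) :
    Htp (wheelData m a b) e (u ++ w₁ ++ v) (u ++ w₂ ++ v) := by
  have h1 := htp_pre u (htp_post v h)
  exact htp_congr (by simp) (by simp) h1

lemma red1 {k D : ℕ} (hk : k ≤ D) (e : Fin (a+b+2)) :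
    Htp (wheelData m a b) e (repi k ++ repg D) (repg (D - k)) := by
  have hD : k + (D - k) = D := by omega
  have h2 := htp_post (m := m) (repg (D-k)) (htp_cancel' (m := m) (repg k) e)
  rw [linv_repg] at h2
  refine htp_congr ?_ (List.nil_append _) h2
  rw [List.append_assoc, ← repg_add, hD]

lemma red2 {k D : ℕ} (hk : k ≤ D) (e : Fin (a+b+2)) :
    Htp (wheelData m a b) e (repg D ++ repi k) (repg (D - k)) := by
  have hD : (D - k) + k = D := by omega
  have h2 := htp_pre (m := m) (e := e) (repg (D-k)) (htp_cancel (m := m) (repg k) _)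
  rw [linv_repg] at h2
  refine htp_congr ?_ (List.append_nil _) h2
  rw [← List.append_assoc, ← repg_add, hD]

lemma htp_square (e : Fin (a+b+2)) :
    Htp (wheelData m a b) e (repg (m*(a+b+2)) ++ [Step.tau]) ([Step.tau] ++ repg (m*(a+b+2))) :=
  Htp.square (B := wheelData m a b) e (memU e)

end Wheel3
section Wheel4
variable (m a b : ℕ)

def XX : PresentedGroup (wheelRels m a b) := PresentedGroup.of ⟨0, by omega⟩
def YY : PresentedGroup (wheelRels m a b) := PresentedGroup.of ⟨1, by omega⟩
def ZZ (i : ℕ) (hi : i < a+b) : PresentedGroup (wheelRels m a b) :=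
  PresentedGroup.of ⟨i+2, by omega⟩

lemma rel_one {r : FreeGroup (Fin (a+b+2))} (hr : r ∈ wheelRels m a b) :
    PresentedGroup.mk (wheelRels m a b) r = 1 :=
  (QuotientGroup.eq_one_iff r).mpr (Subgroup.subset_normalClosure hr)

lemma mk_of (j : Fin (a+b+2)) :
    PresentedGroup.mk (wheelRels m a b) (FreeGroup.of j) = PresentedGroup.of j := rfl

lemma XY_comm : XX m a b ^ m * YY m a b = YY m a b * XX m a b ^ m := by
  have h := rel_one m a b (Or.inl rfl)
  rw [map_mul, map_mul, map_mul, map_inv, map_inv, map_pow, mk_of, mk_of] at h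
  have h' : XX m a b ^ m * YY m a b * (XX m a b ^ m)⁻¹ * (YY m a b)⁻¹ = 1 := h
  have : XX m a b ^ m * YY m a b
      = (XX m a b ^ m * YY m a b * (XX m a b ^ m)⁻¹ * (YY m a b)⁻¹) * (YY m a b * XX m a b ^ m) := by
    group
  rw [h', one_mul] at this
  exact this

lemma XZ_comm (i : ℕ) (hi : i < a+b) :
    XX m a b ^ m * ZZ m a b i hi = ZZ m a b i hi * XX m a b ^ m := by
  have h := rel_one m a b (Or.inr (Or.inl ⟨⟨i, hi⟩, rfl⟩))
  rw [map_mul, map_mul, map_mul, map_inv, map_inv, map_pow, mk_of, mk_of] at h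
  have h' : XX m a b ^ m * ZZ m a b i hi * (XX m a b ^ m)⁻¹ * (ZZ m a b i hi)⁻¹ = 1 := h
  have : XX m a b ^ m * ZZ m a b i hi
      = (XX m a b ^ m * ZZ m a b i hi * (XX m a b ^ m)⁻¹ * (ZZ m a b i hi)⁻¹)
        * (ZZ m a b i hi * XX m a b ^ m) := by
    group
  rw [h', one_mul] at this
  exact this

lemma Z_sq (i : ℕ) (hi : i < a+b) : ZZ m a b i hi * ZZ m a b i hi = 1 := by
  have h := rel_one m a b (Or.inr (Or.inr ⟨⟨i, hi⟩, rfl⟩))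
  rw [map_mul, mk_of] at h
  exact h

lemma XinvZ_comm (i : ℕ) (hi : i < a+b) :
    XX m a b ^ m * (ZZ m a b i hi)⁻¹ = (ZZ m a b i hi)⁻¹ * XX m a b ^ m := by
  have h := XZ_comm m a b i hi
  calc XX m a b ^ m * (ZZ m a b i hi)⁻¹
      = (ZZ m a b i hi)⁻¹ * (ZZ m a b i hi * XX m a b ^ m) * (ZZ m a b i hi)⁻¹ := by group
    _ = (ZZ m a b i hi)⁻¹ * (XX m a b ^ m * ZZ m a b i hi) * (ZZ m a b i hi)⁻¹ := by rw [← h]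
    _ = (ZZ m a b i hi)⁻¹ * XX m a b ^ m := by group

lemma XYinv_comm :
    XX m a b ^ m * (YY m a b)⁻¹ = (YY m a b)⁻¹ * XX m a b ^ m := by
  have h := XY_comm m a b
  calc XX m a b ^ m * (YY m a b)⁻¹
      = (YY m a b)⁻¹ * (YY m a b * XX m a b ^ m) * (YY m a b)⁻¹ := by group
    _ = (YY m a b)⁻¹ * (XX m a b ^ m * YY m a b) * (YY m a b)⁻¹ := by rw [← h]
    _ = (YY m a b)⁻¹ * XX m a b ^ m := by group

end Wheel4
section Wheel5
variable (m a b : ℕ)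

/-- The contribution of one step at a given position. -/
def cf (p : Fin (a+b+2)) : Step → PresentedGroup (wheelRels m a b)
  | Step.g => if p.1 = a+b+1 then XX m a b else 1
  | Step.ginv => if p.1 = 0 then (XX m a b)⁻¹ else 1
  | Step.tau =>
      if p.1 = 0 then YY m a b
      else if p.1 = a+1 then (YY m a b)⁻¹
      else PresentedGroup.of ⟨if p.1 ≤ a then p.1 + 1 else p.1,
        by have := p.isLt; split <;> omega⟩

/-- The image of a walk in the presented group (anti-homomorphically). -/
def Phi : List Step → Fin (a+b+2) → PresentedGroup (wheelRels m a b)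
  | [], _ => 1
  | s :: l, e => Phi l ((wheelData m a b).stepFun s e) * cf m a b e s

lemma Phi_nil (e : Fin (a+b+2)) : Phi m a b [] e = 1 := rfl

lemma Phi_cons (s : Step) (l : List Step) (e : Fin (a+b+2)) :
    Phi m a b (s :: l) e = Phi m a b l ((wheelData m a b).stepFun s e) * cf m a b e s := rfl

lemma Phi_append (l₁ l₂ : List Step) : ∀ e : Fin (a+b+2),
    Phi m a b (l₁ ++ l₂) e = Phi m a b l₂ ((wheelData m a b).endpt e l₁) * Phi m a b l₁ e := by
  induction l₁ with
  | nil => intro e; rw [List.nil_append, Phi_nil, mul_one]; rfl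
  | cons s l ih =>
    intro e
    rw [List.cons_append, Phi_cons, Phi_cons, ih, mul_assoc]
    rfl

lemma Phi_repg_one (k : ℕ) : ∀ (p : Fin (a+b+2)), p.1 + k < a+b+2 → Phi m a b (repg k) p = 1 := by
  induction k with
  | zero => intro p _; rfl
  | succ k ih =>
    intro p hp
    rw [repg_succ, Phi_cons, step_g]
    have hc : cf m a b p Step.g = 1 := by
      show (if p.1 = a+b+1 then XX m a b else 1) = 1
      rw [if_neg (by omega)]
    rw [hc, mul_one]
    exact ih _ (by rw [val_add_one a b p (by omega)]; omega)

lemma Phi_repi_one (k : ℕ) : ∀ (p : Fin (a+b+2)), k ≤ p.1 → Phi m a b (repi k) p = 1 := by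
  induction k with
  | zero => intro p _; rfl
  | succ k ih =>
    intro p hp
    rw [repi_succ, Phi_cons, step_ginv]
    have hc : cf m a b p Step.ginv = 1 := by
      show (if p.1 = 0 then (XX m a b)⁻¹ else 1) = 1
      rw [if_neg (by omega)]
    rw [hc, mul_one]
    exact ih _ (by rw [val_sub_one a b p (by omega)]; omega)

lemma Phi_to_zero (p : Fin (a+b+2)) :
    Phi m a b (repg (a+b+2 - p.1)) p = XX m a b := by
  have hlt := p.isLt
  have h1 : a+b+2 - p.1 = (a+b+1 - p.1) + 1 := by omega
  rw [h1, repg_succ', Phi_append, Phi_repg_one m a b _ p (by omega), mul_one]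
  have hq : ((wheelData m a b).endpt p (repg (a+b+1 - p.1))).1 = a+b+1 := by
    rw [endpt_repg, val_add_nat a b p _ (by omega)]
    omega
  rw [Phi_cons, Phi_nil, one_mul]
  show (if _ = a+b+1 then XX m a b else 1) = XX m a b
  rw [if_pos hq]

lemma endpt_to_zero (p : Fin (a+b+2)) :
    (wheelData m a b).endpt p (repg (a+b+2 - p.1)) = ⟨0, by omega⟩ := by
  rw [endpt_repg]
  have : p + ((a+b+2 - p.1 : ℕ) : Fin (a+b+2)) = ((p.1 + (a+b+2 - p.1) : ℕ) : Fin (a+b+2)) := by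
    rw [Nat.cast_add, Fin.cast_val_eq_self]
  rw [this, show p.1 + (a+b+2 - p.1) = a+b+2 by have := p.isLt; omega, natCast_N]
  exact (mk_zero_eq a b).symm

lemma endpt_repg_mulN (k : ℕ) (e : Fin (a+b+2)) :
    (wheelData m a b).endpt e (repg (k * (a+b+2))) = e := by
  rw [endpt_repg, add_cast_mul_N]

lemma Phi_loops (k : ℕ) : Phi m a b (repg (k * (a+b+2))) ⟨0, by omega⟩ = XX m a b ^ k := by
  induction k with
  | zero => rw [Nat.zero_mul]; rfl
  | succ k ih =>
    have h1 : (k+1) * (a+b+2) = (a+b+2) + k * (a+b+2) := by ring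
    rw [h1, repg_add, Phi_append]
    have h2 : (wheelData m a b).endpt ⟨0, by omega⟩ (repg (a+b+2)) = ⟨0, by omega⟩ := by
      have := endpt_to_zero m a b ⟨0, by omega⟩
      simpa using this
    rw [h2, ih]
    have h3 : Phi m a b (repg (a+b+2)) (⟨0, by omega⟩ : Fin (a+b+2)) = XX m a b := by
      have := Phi_to_zero m a b ⟨0, by omega⟩
      simpa using this
    rw [h3, pow_succ]

lemma Phi_repD (hm : 1 ≤ m) (e : Fin (a+b+2)) :
    Phi m a b (repg (m * (a+b+2))) e = XX m a b ^ m := by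
  have hlt := e.isLt
  have hsplit : m * (a+b+2) = (a+b+2 - e.1) + ((m-1) * (a+b+2) + e.1) := by
    have : (m-1+1) = m := by omega
    calc m * (a+b+2) = (m-1+1) * (a+b+2) := by rw [this]
    _ = (a+b+2 - e.1) + ((m-1) * (a+b+2) + e.1) := by ring_nf; omega
  rw [hsplit, repg_add, Phi_append, repg_add, Phi_append]
  rw [Phi_to_zero, endpt_to_zero]
  have h2 : (wheelData m a b).endpt (⟨0, by omega⟩ : Fin (a+b+2)) (repg ((m-1) * (a+b+2))) = ⟨0, by omega⟩ :=
    endpt_repg_mulN m a b _ _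
  rw [h2, Phi_loops]
  rw [Phi_repg_one m a b e.1 ⟨0, by omega⟩ (by simpa using hlt), one_mul]
  rw [← pow_succ, show m - 1 + 1 = m by omega]

end Wheel5
section Wheel6
variable {m a b : ℕ}

lemma cf_g_eq (p : Fin (a+b+2)) :
    cf m a b p Step.g = if p.1 = a+b+1 then XX m a b else 1 := rfl

lemma cf_ginv_eq (p : Fin (a+b+2)) :
    cf m a b p Step.ginv = if p.1 = 0 then (XX m a b)⁻¹ else 1 := rfl

lemma cf_tau_eq (p : Fin (a+b+2)) :
    cf m a b p Step.tau = if p.1 = 0 then YY m a b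
      else if p.1 = a+1 then (YY m a b)⁻¹
      else PresentedGroup.of ⟨if p.1 ≤ a then p.1 + 1 else p.1,
        by have := p.isLt; split <;> omega⟩ := rfl

lemma htp_endpt {e : Fin (a+b+2)} {l₁ l₂ : List Step}
    (h : Htp (wheelData m a b) e l₁ l₂) :
    (wheelData m a b).endpt e l₁ = (wheelData m a b).endpt e l₂ := by
  obtain ⟨e', rfl⟩ : ∃ e' : (wheelData m a b).E, e' = e := ⟨e, rfl⟩
  induction h with
  | refl e l _ => rfl
  | symm _ ih => exact ih.symm
  | trans _ _ ih1 ih2 => exact ih1.trans ih2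
  | gginv e => exact stepFun_inv Step.g e
  | ginvg e => exact stepFun_inv Step.ginv e
  | tautau e _ => exact tau_invol m a b e
  | square e _ =>
    show (wheelData m a b).endpt e (repg (m*(a+b+2)) ++ [Step.tau])
        = (wheelData m a b).endpt e (Step.tau :: repg (m*(a+b+2)))
    rw [BrauerData.endpt_append]
    rw [endpt_repg_mulN]
    show (wheelData m a b).tau e = (wheelData m a b).endpt ((wheelData m a b).tau e) (repg (m*(a+b+2)))
    rw [endpt_repg_mulN]
  | post u _ _ ih => rw [BrauerData.endpt_append, BrauerData.endpt_append, ih]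
  | pre e v _ _ ih => rw [BrauerData.endpt_append, BrauerData.endpt_append, ih]

lemma cf_tau_comm (p : Fin (a+b+2)) :
    XX m a b ^ m * cf m a b p Step.tau = cf m a b p Step.tau * XX m a b ^ m := by
  have hlt := p.isLt
  rw [cf_tau_eq]
  by_cases h0 : p.1 = 0
  · rw [if_pos h0]
    exact XY_comm m a b
  by_cases h1 : p.1 = a+1
  · rw [if_neg h0, if_pos h1]
    exact XYinv_comm m a b
  rw [if_neg h0, if_neg h1]
  by_cases h2 : p.1 ≤ a
  · have hidx : (⟨if p.1 ≤ a then p.1 + 1 else p.1, by have := p.isLt; split <;> omega⟩ : Fin (a+b+2))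
        = ⟨(p.1-1)+2, by omega⟩ := by
      apply Fin.ext
      show (if p.1 ≤ a then p.1 + 1 else p.1) = (p.1-1)+2
      rw [if_pos h2]; omega
    rw [hidx]
    exact XZ_comm m a b (p.1-1) (by omega)
  · have hidx : (⟨if p.1 ≤ a then p.1 + 1 else p.1, by have := p.isLt; split <;> omega⟩ : Fin (a+b+2))
        = ⟨(p.1-2)+2, by omega⟩ := by
      apply Fin.ext
      show (if p.1 ≤ a then p.1 + 1 else p.1) = (p.1-2)+2
      rw [if_neg h2]; omega
    rw [hidx]
    exact XZ_comm m a b (p.1-2) (by omega)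

lemma cf_tau_sq (p : Fin (a+b+2)) :
    cf m a b ((wheelData m a b).tau p) Step.tau * cf m a b p Step.tau = 1 := by
  have hlt := p.isLt
  by_cases h0 : p.1 = 0
  · have hp : p = ⟨0, by omega⟩ := Fin.ext h0
    rw [hp, tau_zero, cf_tau_eq, cf_tau_eq]
    simp only [if_neg (show ¬((⟨a+1, by omega⟩ : Fin (a+b+2)).1 = 0) by simp),
      if_pos (show (⟨a+1, by omega⟩ : Fin (a+b+2)).1 = a+1 from rfl),
      if_pos (show (⟨0, by omega⟩ : Fin (a+b+2)).1 = 0 from rfl)]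
    exact inv_mul_cancel _
  by_cases h1 : p.1 = a+1
  · have hp : p = ⟨a+1, by omega⟩ := Fin.ext h1
    rw [hp, tau_a1, cf_tau_eq, cf_tau_eq]
    simp only [if_pos (show (⟨0, by omega⟩ : Fin (a+b+2)).1 = 0 from rfl),
      if_neg (show ¬((⟨a+1, by omega⟩ : Fin (a+b+2)).1 = 0) by simp),
      if_pos (show (⟨a+1, by omega⟩ : Fin (a+b+2)).1 = a+1 from rfl)]
    exact mul_inv_cancel _
  · rw [tau_fix m a b p h0 h1, cf_tau_eq, if_neg h0, if_neg h1]
    by_cases h2 : p.1 ≤ a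
    · have hidx : (⟨if p.1 ≤ a then p.1 + 1 else p.1, by have := p.isLt; split <;> omega⟩ : Fin (a+b+2))
          = ⟨(p.1-1)+2, by omega⟩ := by
        apply Fin.ext
        show (if p.1 ≤ a then p.1 + 1 else p.1) = (p.1-1)+2
        rw [if_pos h2]; omega
      rw [hidx]
      exact Z_sq m a b (p.1-1) (by omega)
    · have hidx : (⟨if p.1 ≤ a then p.1 + 1 else p.1, by have := p.isLt; split <;> omega⟩ : Fin (a+b+2))
          = ⟨(p.1-2)+2, by omega⟩ := by
        apply Fin.ext
        show (if p.1 ≤ a then p.1 + 1 else p.1) = (p.1-2)+2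
        rw [if_neg h2]; omega
      rw [hidx]
      exact Z_sq m a b (p.1-2) (by omega)

lemma phi_gginv (e : Fin (a+b+2)) :
    Phi m a b [Step.g, Step.ginv] e = Phi m a b [] e := by
  rw [Phi_cons, Phi_cons, Phi_nil, one_mul, Phi_nil, step_g]
  have hlt := e.isLt
  by_cases hN : e.1 = a+b+1
  · rw [cf_g_eq, cf_ginv_eq, if_pos hN, if_pos (val_last_add_one a b e hN), inv_mul_cancel]
  · rw [cf_g_eq, cf_ginv_eq, if_neg hN,
      if_neg (by rw [val_add_one a b e (by omega)]; omega), mul_one]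

lemma phi_ginvg (e : Fin (a+b+2)) :
    Phi m a b [Step.ginv, Step.g] e = Phi m a b [] e := by
  rw [Phi_cons, Phi_cons, Phi_nil, one_mul, Phi_nil, step_ginv]
  have hlt := e.isLt
  by_cases h0 : e.1 = 0
  · rw [cf_ginv_eq, cf_g_eq, if_pos h0, if_pos (val_zero_sub_one a b e h0), mul_inv_cancel]
  · rw [cf_ginv_eq, cf_g_eq, if_neg h0,
      if_neg (by rw [val_sub_one a b e (by omega)]; omega), mul_one]

lemma phi_tautau (e : Fin (a+b+2)) :
    Phi m a b [Step.tau, Step.tau] e = Phi m a b [] e := by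
  rw [Phi_cons, Phi_cons, Phi_nil, one_mul, Phi_nil, step_tau]
  exact cf_tau_sq e

lemma phi_square (hm : 1 ≤ m) (e : Fin (a+b+2)) :
    Phi m a b (repg (m*(a+b+2)) ++ [Step.tau]) e
      = Phi m a b (Step.tau :: repg (m*(a+b+2))) e := by
  simp only [Phi_append, Phi_cons, Phi_nil, step_tau, endpt_repg_mulN, Phi_repD m a b hm, one_mul]
  exact (cf_tau_comm (m := m) e).symm

lemma Phi_htp (hm : 1 ≤ m) {e : Fin (a+b+2)} {l₁ l₂ : List Step}
    (h : Htp (wheelData m a b) e l₁ l₂) :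
    Phi m a b l₁ e = Phi m a b l₂ e := by
  obtain ⟨e', rfl⟩ : ∃ e' : (wheelData m a b).E, e' = e := ⟨e, rfl⟩
  induction h with
  | refl e l _ => rfl
  | symm _ ih => exact ih.symm
  | trans _ _ ih1 ih2 => exact ih1.trans ih2
  | gginv e => exact phi_gginv e
  | ginvg e => exact phi_ginvg e
  | tautau e _ => exact phi_tautau e
  | square e _ => exact phi_square hm e
  | post u h _ ih => rw [Phi_append, Phi_append, ih, htp_endpt h]
  | pre e v _ _ ih => rw [Phi_append, Phi_append, ih]

end Wheel6
section Wheel7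
variable {m a b : ℕ}

lemma endpt_linv : ∀ (l : List Step) (e : Fin (a+b+2)),
    (wheelData m a b).endpt ((wheelData m a b).endpt e l) (linv l) = e := by
  intro l
  induction l with
  | nil => intro e; rfl
  | cons s l ih =>
    intro e
    rw [linv_cons, BrauerData.endpt_append]
    show (wheelData m a b).stepFun s.inv _ = e
    have h1 : (wheelData m a b).endpt e (s :: l)
        = (wheelData m a b).endpt ((wheelData m a b).stepFun s e) l := rfl
    rw [h1, ih]
    exact stepFun_inv s e

lemma htp_linv {e : Fin (a+b+2)} {l₁ l₂ : List Step}
    (h1 : (wheelData m a b).endpt e l₁ = e)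
    (h : Htp (wheelData m a b) e l₁ l₂) :
    Htp (wheelData m a b) e (linv l₁) (linv l₂) := by
  have he : (wheelData m a b).endpt e (linv l₁) = e := by
    have h2 := endpt_linv (m := m) l₁ e
    rwa [h1] at h2
  have A : Htp (wheelData m a b) e (linv l₁ ++ (l₂ ++ linv l₂)) (linv l₁ ++ []) :=
    htp_pre (linv l₁) (htp_cancel l₂ _)
  have C : Htp (wheelData m a b) e (linv l₁ ++ l₁) (linv l₁ ++ l₂) :=
    htp_pre (linv l₁) (he.symm ▸ h)
  have B : Htp (wheelData m a b) e (linv l₁ ++ l₂) [] :=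
    Htp.trans (Htp.symm C) (htp_cancel' l₁ e)
  have D : Htp (wheelData m a b) e ((linv l₁ ++ l₂) ++ linv l₂) ([] ++ linv l₂) :=
    htp_post (linv l₂) B
  have A' : Htp (wheelData m a b) e (linv l₁) ((linv l₁ ++ l₂) ++ linv l₂) :=
    htp_congr (List.append_nil _) (List.append_assoc _ _ _).symm (Htp.symm A)
  have D' : Htp (wheelData m a b) e ((linv l₁ ++ l₂) ++ linv l₂) (linv l₂) :=
    htp_congr rfl (List.nil_append _) D
  exact Htp.trans A' D'

variable (m a b)

/-- The trivial closed walk. -/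
def onew (e : Fin (a+b+2)) : ClosedWalk (wheelData m a b) e :=
  ⟨[], wvalid m a b [] e, rfl⟩

/-- The inverse closed walk. -/
def invw (e : Fin (a+b+2)) (u : ClosedWalk (wheelData m a b) e) :
    ClosedWalk (wheelData m a b) e :=
  ⟨linv u.1, wvalid m a b _ e, by
    have h2 := endpt_linv (m := m) u.1 e
    rwa [u.2.2] at h2⟩

/-- Multiplication on the fundamental group. -/
def pi1mulFn (e : Fin (a+b+2)) :
    Pi1 (wheelData m a b) e → Pi1 (wheelData m a b) e → Pi1 (wheelData m a b) e := fun x y =>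
  Quot.lift (fun (u : ClosedWalk (wheelData m a b) e) =>
    Quot.lift (fun (v : ClosedWalk (wheelData m a b) e) =>
      Quot.mk _ (ClosedWalk.comp v u))
      (fun v₁ v₂ hv => Quot.sound (htp_post u.1 hv)) y)
    (fun u₁ u₂ hu => by
      induction y using Quot.ind with
      | _ v =>
        exact Quot.sound (htp_pre v.1 (v.2.2.symm ▸ hu))) x

/-- Inversion on the fundamental group. -/
def pi1invFn (e : Fin (a+b+2)) :
    Pi1 (wheelData m a b) e → Pi1 (wheelData m a b) e :=
  Quot.lift (fun u => Quot.mk _ (invw m a b e u))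
    (fun u₁ u₂ hu => Quot.sound (htp_linv u₁.2.2 hu))

lemma pi1mulFn_mk (e : Fin (a+b+2)) (u v : ClosedWalk (wheelData m a b) e) :
    pi1mulFn m a b e (Quot.mk _ u) (Quot.mk _ v) = Quot.mk _ (ClosedWalk.comp v u) := rfl

lemma pi1invFn_mk (e : Fin (a+b+2)) (u : ClosedWalk (wheelData m a b) e) :
    pi1invFn m a b e (Quot.mk _ u) = Quot.mk _ (invw m a b e u) := rfl

instance pi1Group (e : Fin (a+b+2)) : Group (Pi1 (wheelData m a b) e) where
  one := Quot.mk _ (onew m a b e)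
  mul := pi1mulFn m a b e
  inv := pi1invFn m a b e
  mul_assoc x y z := by
    induction x using Quot.ind with | _ u =>
    induction y using Quot.ind with | _ v =>
    induction z using Quot.ind with | _ w =>
    show pi1mulFn m a b e (pi1mulFn m a b e (Quot.mk _ u) (Quot.mk _ v)) (Quot.mk _ w)
      = pi1mulFn m a b e (Quot.mk _ u) (pi1mulFn m a b e (Quot.mk _ v) (Quot.mk _ w))
    rw [pi1mulFn_mk, pi1mulFn_mk, pi1mulFn_mk, pi1mulFn_mk]
    exact congrArg _ (Subtype.ext (List.append_assoc w.1 v.1 u.1).symm)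
  one_mul x := by
    induction x using Quot.ind with | _ u =>
    show pi1mulFn m a b e (Quot.mk _ (onew m a b e)) (Quot.mk _ u) = Quot.mk _ u
    rw [pi1mulFn_mk]
    exact congrArg _ (Subtype.ext (List.append_nil u.1))
  mul_one x := by
    induction x using Quot.ind with | _ u =>
    show pi1mulFn m a b e (Quot.mk _ u) (Quot.mk _ (onew m a b e)) = Quot.mk _ u
    rw [pi1mulFn_mk]
    exact congrArg _ (Subtype.ext (List.nil_append u.1))
  inv_mul_cancel x := by
    induction x using Quot.ind with | _ u =>
    show pi1mulFn m a b e (pi1invFn m a b e (Quot.mk _ u)) (Quot.mk _ u) = Quot.mk _ (onew m a b e)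
    rw [pi1invFn_mk, pi1mulFn_mk]
    exact Quot.sound (htp_cancel u.1 e)

/-- The class of a closed walk in the fundamental group. -/
def mkw (e : Fin (a+b+2)) (u : ClosedWalk (wheelData m a b) e) : Pi1 (wheelData m a b) e :=
  Quot.mk _ u

lemma pi1_mul_mk (e : Fin (a+b+2)) (u v : ClosedWalk (wheelData m a b) e) :
    mkw m a b e u * mkw m a b e v = mkw m a b e (ClosedWalk.comp v u) := rfl

lemma pi1_inv_mk (e : Fin (a+b+2)) (u : ClosedWalk (wheelData m a b) e) :
    (mkw m a b e u)⁻¹ = mkw m a b e (invw m a b e u) := rfl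

lemma pi1_one (e : Fin (a+b+2)) :
    (1 : Pi1 (wheelData m a b) e) = mkw m a b e (onew m a b e) := rfl

lemma mkw_sound {e : Fin (a+b+2)} {u v : ClosedWalk (wheelData m a b) e}
    (h : Htp (wheelData m a b) e u.1 v.1) : mkw m a b e u = mkw m a b e v := Quot.sound h

lemma mkw_congr {e : Fin (a+b+2)} {u v : ClosedWalk (wheelData m a b) e}
    (h : u.1 = v.1) : mkw m a b e u = mkw m a b e v := congrArg _ (Subtype.ext h)

end Wheel7
section Wheel8
variable (m a b : ℕ)

/-- The basepoint. -/
def e0 (a b : ℕ) : Fin (a+b+2) := ⟨0, by omega⟩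

/-- The walk `y`. -/
def ywalk (a : ℕ) : List Step := Step.tau :: repi (a+1)

/-- The walk `z` at position `p`. -/
def zwalk (p : ℕ) : List Step := repg p ++ Step.tau :: repi p

/-- The position of the `i`-th fixed half-edge. -/
def posn (a i : ℕ) : ℕ := if i < a then i+1 else i+2

lemma posn_spec (i : ℕ) (h : i < a+b) :
    1 ≤ posn a i ∧ posn a i < a+b+2 ∧ posn a i ≠ 0 ∧ posn a i ≠ a+1 := by
  unfold posn; split <;> omega

lemma cast_mk (k : ℕ) (h : k < a+b+2) : ((k:ℕ) : Fin (a+b+2)) = ⟨k, h⟩ := by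
  apply Fin.ext
  rw [Fin.val_natCast]
  exact Nat.mod_eq_of_lt h

lemma xwalk_closed : (wheelData m a b).endpt (e0 a b) (repg (a+b+2)) = e0 a b := by
  rw [endpt_repg, natCast_N, add_zero]

lemma ywalk_closed : (wheelData m a b).endpt (e0 a b) (ywalk a) = e0 a b := by
  show (wheelData m a b).endpt ((wheelData m a b).tau (e0 a b)) (repi (a+1)) = e0 a b
  rw [show (e0 a b) = (⟨0, by omega⟩ : Fin (a+b+2)) from rfl, tau_zero, endpt_repi]
  rw [cast_mk a b (a+1) (by omega), sub_self]
  exact (mk_zero_eq a b).symm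

lemma endpt_e0_repg (p : ℕ) (hp : p < a+b+2) :
    (wheelData m a b).endpt (e0 a b) (repg p) = ⟨p, hp⟩ := by
  rw [endpt_repg]
  apply Fin.ext
  have h0 : (e0 a b).1 = 0 := rfl
  rw [val_add_nat a b _ p (by rw [h0]; omega), h0]
  simp

lemma zwalk_closed (p : ℕ) (hp : p < a+b+2) (hp0 : p ≠ 0) (hpa : p ≠ a+1) :
    (wheelData m a b).endpt (e0 a b) (zwalk p) = e0 a b := by
  show (wheelData m a b).endpt (e0 a b) (repg p ++ Step.tau :: repi p) = e0 a b
  rw [BrauerData.endpt_append, endpt_e0_repg m a b p hp]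
  show (wheelData m a b).endpt ((wheelData m a b).tau ⟨p, hp⟩) (repi p) = e0 a b
  rw [tau_fix m a b _ hp0 hpa, endpt_repi, cast_mk a b p hp, sub_self]
  exact (mk_zero_eq a b).symm

/-- The underlying walks of the generators. -/
def genw (a b : ℕ) (j : Fin (a+b+2)) : List Step :=
  if j.1 = 0 then repg (a+b+2)
  else if j.1 = 1 then ywalk a
  else zwalk (posn a (j.1 - 2))

lemma genw_closed (j : Fin (a+b+2)) :
    (wheelData m a b).endpt (e0 a b) (genw a b j) = e0 a b := by
  unfold genw
  by_cases h0 : j.1 = 0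
  · rw [if_pos h0]; exact xwalk_closed m a b
  by_cases h1 : j.1 = 1
  · rw [if_neg h0, if_pos h1]; exact ywalk_closed m a b
  rw [if_neg h0, if_neg h1]
  have hj := j.isLt
  obtain ⟨c1, c2, c3, c4⟩ := posn_spec a b (j.1 - 2) (by omega)
  exact zwalk_closed m a b _ c2 c3 c4

/-- A closed walk at the basepoint from a list. -/
def cl0 (l : List Step) (h : (wheelData m a b).endpt (e0 a b) l = e0 a b) :
    ClosedWalk (wheelData m a b) (e0 a b) :=
  ⟨l, wvalid m a b l _, h⟩

/-- The generators of the fundamental group. -/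
def genp (j : Fin (a+b+2)) : Pi1 (wheelData m a b) (e0 a b) :=
  mkw m a b _ (cl0 m a b (genw a b j) (genw_closed m a b j))

lemma repgN_pow (k : ℕ) :
    mkw m a b _ (cl0 m a b (repg (a+b+2)) (xwalk_closed m a b)) ^ k
      = mkw m a b _ (cl0 m a b (repg (k*(a+b+2))) (endpt_repg_mulN m a b k _)) := by
  induction k with
  | zero =>
    rw [pow_zero, pi1_one]
    refine mkw_congr m a b ?_
    show ([] : List Step) = repg (0*(a+b+2))
    rw [Nat.zero_mul]
    rfl
  | succ k ih =>
    rw [pow_succ, ih, pi1_mul_mk]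
    refine mkw_congr m a b ?_
    show repg (a+b+2) ++ repg (k*(a+b+2)) = repg ((k+1)*(a+b+2))
    rw [← repg_add]
    congr 1
    ring

-- homotopy commutations
lemma cancel_gi (k : ℕ) (e : Fin (a+b+2)) :
    Htp (wheelData m a b) e (repg k ++ repi k) [] := by
  have h := htp_cancel (m := m) (repg k) e
  rwa [linv_repg] at h

lemma cancel_ig (k : ℕ) (e : Fin (a+b+2)) :
    Htp (wheelData m a b) e (repi k ++ repg k) [] := by
  have h := htp_cancel' (m := m) (repg k) e
  rwa [linv_repg] at h

lemma NleD (hm : 1 ≤ m) : a+b+2 ≤ m*(a+b+2) := by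
  calc a+b+2 = 1*(a+b+2) := by ring
    _ ≤ m*(a+b+2) := Nat.mul_le_mul_right _ hm

lemma comm_y (hm : 1 ≤ m) (e : Fin (a+b+2)) :
    Htp (wheelData m a b) e (ywalk a ++ repg (m*(a+b+2))) (repg (m*(a+b+2)) ++ ywalk a) := by
  have hle : a+1 ≤ m*(a+b+2) := by have := NleD m a b hm; omega
  have A : Htp (wheelData m a b) e (ywalk a ++ repg (m*(a+b+2)))
      ([Step.tau] ++ repg (m*(a+b+2) - (a+1))) := by
    have h1 := htp_pre (m := m) (e := e) [Step.tau] (red1 hle _)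
    exact htp_congr (by simp [ywalk]) rfl h1
  have B1 : Htp (wheelData m a b) e (repg (m*(a+b+2)) ++ ywalk a)
      ([Step.tau] ++ (repg (m*(a+b+2)) ++ repi (a+1))) := by
    have h1 := htp_post (m := m) (e := e) (repi (a+1)) (htp_square e)
    exact htp_congr (by simp [ywalk]) (by simp) h1
  have B2 : Htp (wheelData m a b) e ([Step.tau] ++ (repg (m*(a+b+2)) ++ repi (a+1)))
      ([Step.tau] ++ repg (m*(a+b+2) - (a+1))) :=
    htp_pre [Step.tau] (red2 hle _)
  exact Htp.trans A (Htp.symm (Htp.trans B1 B2))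

lemma comm_z (hm : 1 ≤ m) (p : ℕ) (hp : p ≤ a+b+2) (e : Fin (a+b+2)) :
    Htp (wheelData m a b) e (zwalk p ++ repg (m*(a+b+2))) (repg (m*(a+b+2)) ++ zwalk p) := by
  have hle : p ≤ m*(a+b+2) := by have := NleD m a b hm; omega
  have A : Htp (wheelData m a b) e (zwalk p ++ repg (m*(a+b+2)))
      ((repg p ++ [Step.tau]) ++ repg (m*(a+b+2) - p)) := by
    have h1 := htp_pre (m := m) (e := e) (repg p ++ [Step.tau]) (red1 hle _)
    exact htp_congr (by simp [zwalk]) rfl h1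
  have B1 : Htp (wheelData m a b) e (repg (m*(a+b+2)) ++ zwalk p)
      ((repg p ++ [Step.tau]) ++ (repg (m*(a+b+2)) ++ repi p)) := by
    have h1 := htp_sandwich (m := m) (e := e) (repg p) (repi p) (htp_square _)
    refine htp_congr ?_ (by simp) h1
    show repg p ++ (repg (m*(a+b+2)) ++ [Step.tau]) ++ repi p = repg (m*(a+b+2)) ++ zwalk p
    have hcomm : repg (m*(a+b+2)) ++ repg p = repg p ++ repg (m*(a+b+2)) := by
      rw [← repg_add, ← repg_add, Nat.add_comm]
    simp only [zwalk]
    rw [← List.append_assoc, ← hcomm]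
    simp
  have B2 : Htp (wheelData m a b) e ((repg p ++ [Step.tau]) ++ (repg (m*(a+b+2)) ++ repi p))
      ((repg p ++ [Step.tau]) ++ repg (m*(a+b+2) - p)) :=
    htp_pre (repg p ++ [Step.tau]) (red2 hle _)
  exact Htp.trans A (Htp.symm (Htp.trans B1 B2))

lemma zsq_htp (p : ℕ) (e : Fin (a+b+2)) :
    Htp (wheelData m a b) e (zwalk p ++ zwalk p) [] := by
  have s1 : Htp (wheelData m a b) e (zwalk p ++ zwalk p)
      (repg p ++ ([Step.tau, Step.tau] ++ repi p)) := by
    have h := htp_sandwich (m := m) (e := e) (repg p ++ [Step.tau]) (Step.tau :: repi p)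
      (cancel_ig m a b p _)
    refine htp_congr ?_ ?_ h
    · show (repg p ++ [Step.tau]) ++ (repi p ++ repg p) ++ (Step.tau :: repi p) = zwalk p ++ zwalk p
      simp [zwalk]
    · simp
  have s2 : Htp (wheelData m a b) e (repg p ++ ([Step.tau, Step.tau] ++ repi p))
      (repg p ++ repi p) := by
    have h := htp_sandwich (m := m) (e := e) (repg p) (repi p)
      (Htp.tautau (B := wheelData m a b) _ (memU _))
    refine htp_congr ?_ ?_ h
    · simp
    · simp
  exact Htp.trans s1 (Htp.trans s2 (cancel_gi m a b p e))

end Wheel8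
section Wheel9
variable (m a b : ℕ)

lemma genw_at0 : genw a b ⟨0, by omega⟩ = repg (a+b+2) := rfl
lemma genw_at1 : genw a b ⟨1, by omega⟩ = ywalk a := rfl
lemma genw_atz (i : ℕ) (hi : i < a+b) :
    genw a b ⟨i+2, by omega⟩ = zwalk (posn a i) := rfl

lemma genp_pow_D (hm : 1 ≤ m) :
    genp m a b ⟨0, by positivity⟩ ^ m
      = mkw m a b _ (cl0 m a b (repg (m*(a+b+2))) (endpt_repg_mulN m a b m _)) := by
  have h1 : genp m a b ⟨0, by positivity⟩
      = mkw m a b _ (cl0 m a b (repg (a+b+2)) (xwalk_closed m a b)) :=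
    mkw_congr m a b rfl
  rw [h1, repgN_pow]

lemma pi1_xy_comm (hm : 1 ≤ m) :
    genp m a b ⟨0, by positivity⟩ ^ m * genp m a b ⟨1, by omega⟩
      = genp m a b ⟨1, by omega⟩ * genp m a b ⟨0, by positivity⟩ ^ m := by
  rw [genp_pow_D m a b hm]
  have h2 : genp m a b ⟨1, by omega⟩
      = mkw m a b _ (cl0 m a b (ywalk a) (ywalk_closed m a b)) := mkw_congr m a b rfl
  rw [h2, pi1_mul_mk, pi1_mul_mk]
  exact mkw_sound m a b (comm_y m a b hm _)

lemma pi1_xz_comm (hm : 1 ≤ m) (i : ℕ) (hi : i < a+b) :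
    genp m a b ⟨0, by positivity⟩ ^ m * genp m a b ⟨i+2, by omega⟩
      = genp m a b ⟨i+2, by omega⟩ * genp m a b ⟨0, by positivity⟩ ^ m := by
  obtain ⟨c1, c2, c3, c4⟩ := posn_spec a b i hi
  rw [genp_pow_D m a b hm]
  have h2 : genp m a b ⟨i+2, by omega⟩
      = mkw m a b _ (cl0 m a b (zwalk (posn a i)) (zwalk_closed m a b _ c2 c3 c4)) := by
    refine mkw_congr m a b ?_
    show genw a b ⟨i+2, by omega⟩ = zwalk (posn a i)
    exact genw_atz a b i hi
  rw [h2, pi1_mul_mk, pi1_mul_mk]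
  exact mkw_sound m a b (comm_z m a b hm (posn a i) (by omega) _)

lemma pi1_z_sq (i : ℕ) (hi : i < a+b) :
    genp m a b ⟨i+2, by omega⟩ * genp m a b ⟨i+2, by omega⟩ = 1 := by
  obtain ⟨c1, c2, c3, c4⟩ := posn_spec a b i hi
  have h2 : genp m a b ⟨i+2, by omega⟩
      = mkw m a b _ (cl0 m a b (zwalk (posn a i)) (zwalk_closed m a b _ c2 c3 c4)) := by
    refine mkw_congr m a b ?_
    show genw a b ⟨i+2, by omega⟩ = zwalk (posn a i)
    exact genw_atz a b i hi
  rw [h2, pi1_mul_mk, pi1_one]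
  exact mkw_sound m a b (zsq_htp m a b (posn a i) _)

lemma comm_to_rel {G : Type*} [Group G] {x y : G} (h : x * y = y * x) :
    x * y * x⁻¹ * y⁻¹ = 1 := by
  rw [h]
  group

lemma hrel (hm : 1 ≤ m) :
    ∀ r ∈ wheelRels m a b, FreeGroup.lift (genp m a b) r = 1 := by
  intro r hr
  rcases hr with h | ⟨i, h⟩ | ⟨i, h⟩ <;> subst h
  · simp only [map_mul, map_inv, map_pow, FreeGroup.lift_apply_of]
    exact comm_to_rel (pi1_xy_comm m a b hm)
  · simp only [map_mul, map_inv, map_pow, FreeGroup.lift_apply_of]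
    exact comm_to_rel (pi1_xz_comm m a b hm i.1 i.2)
  · simp only [map_mul, FreeGroup.lift_apply_of]
    exact pi1_z_sq m a b i.1 i.2

/-- The homomorphism from the presented group to the fundamental group. -/
noncomputable def Psi (hm : 1 ≤ m) :
    PresentedGroup (wheelRels m a b) →* Pi1 (wheelData m a b) (e0 a b) :=
  PresentedGroup.toGroup (hrel m a b hm)

lemma Psi_of (hm : 1 ≤ m) (j : Fin (a+b+2)) :
    Psi m a b hm (PresentedGroup.of j) = genp m a b j :=
  PresentedGroup.toGroup.of _

end Wheel9
section Wheel10
variable (m a b : ℕ)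

/-- The homomorphism from the fundamental group to the presented group. -/
def phiHom (hm : 1 ≤ m) :
    Pi1 (wheelData m a b) (e0 a b) →* PresentedGroup (wheelRels m a b) where
  toFun := Quot.lift (fun (w : ClosedWalk (wheelData m a b) (e0 a b)) => Phi m a b w.1 (e0 a b))
    (fun _ _ h => Phi_htp hm h)
  map_one' := rfl
  map_mul' x y := by
    induction x using Quot.ind with | _ u =>
    induction y using Quot.ind with | _ v =>
    show Phi m a b (v.1 ++ u.1) (e0 a b) = Phi m a b u.1 (e0 a b) * Phi m a b v.1 (e0 a b)
    rw [Phi_append, v.2.2]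

lemma phiHom_mkw (hm : 1 ≤ m) (u : ClosedWalk (wheelData m a b) (e0 a b)) :
    phiHom m a b hm (mkw m a b _ u) = Phi m a b u.1 (e0 a b) := rfl

lemma Phi_xwalk : Phi m a b (repg (a+b+2)) (e0 a b) = XX m a b := by
  have h := Phi_to_zero m a b (e0 a b)
  simpa [e0] using h

lemma Phi_ywalk : Phi m a b (ywalk a) (e0 a b) = YY m a b := by
  show Phi m a b (repi (a+1)) ((wheelData m a b).tau (e0 a b)) * cf m a b (e0 a b) Step.tau
      = YY m a b
  rw [show (e0 a b) = (⟨0, by omega⟩ : Fin (a+b+2)) from rfl, tau_zero]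
  rw [Phi_repi_one m a b (a+1) ⟨a+1, by omega⟩ (le_refl _), one_mul, cf_tau_eq]
  rw [if_pos rfl]

lemma Phi_zwalk (p : ℕ) (c2 : p < a+b+2) (c3 : p ≠ 0) (c4 : p ≠ a+1) :
    Phi m a b (zwalk p) (e0 a b)
      = PresentedGroup.of ⟨if p ≤ a then p + 1 else p, by split <;> omega⟩ := by
  show Phi m a b (repg p ++ Step.tau :: repi p) (e0 a b) = _
  rw [Phi_append, endpt_e0_repg m a b p c2,
    Phi_repg_one m a b p (e0 a b) (by have h0 : (e0 a b).1 = 0 := rfl; omega), mul_one]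
  show Phi m a b (repi p) ((wheelData m a b).tau ⟨p, c2⟩) * cf m a b ⟨p, c2⟩ Step.tau = _
  rw [tau_fix m a b _ c3 c4, Phi_repi_one m a b p ⟨p, c2⟩ (le_refl _), one_mul, cf_tau_eq]
  rw [if_neg c3, if_neg c4]

lemma phi_genp (hm : 1 ≤ m) (j : Fin (a+b+2)) :
    phiHom m a b hm (genp m a b j) = PresentedGroup.of j := by
  have hj := j.isLt
  by_cases h0 : j.1 = 0
  · have hje : j = ⟨0, by omega⟩ := Fin.ext h0
    rw [hje]
    rw [show genp m a b ⟨0, by omega⟩ = mkw m a b _ (cl0 m a b (repg (a+b+2))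
      (xwalk_closed m a b)) from mkw_congr m a b rfl, phiHom_mkw]
    exact Phi_xwalk m a b
  by_cases h1 : j.1 = 1
  · have hje : j = ⟨1, by omega⟩ := Fin.ext h1
    rw [hje]
    rw [show genp m a b ⟨1, by omega⟩ = mkw m a b _ (cl0 m a b (ywalk a)
      (ywalk_closed m a b)) from mkw_congr m a b rfl, phiHom_mkw]
    exact Phi_ywalk m a b
  · obtain ⟨c1, c2, c3, c4⟩ := posn_spec a b (j.1 - 2) (by omega)
    have hgw : genw a b j = zwalk (posn a (j.1 - 2)) := by
      unfold genw
      rw [if_neg h0, if_neg h1]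
    rw [show genp m a b j = mkw m a b _ (cl0 m a b (zwalk (posn a (j.1-2)))
      (zwalk_closed m a b _ c2 c3 c4)) from mkw_congr m a b hgw, phiHom_mkw]
    show Phi m a b (zwalk (posn a (j.1-2))) (e0 a b) = _
    rw [Phi_zwalk m a b _ c2 c3 c4]
    refine congrArg _ (Fin.ext ?_)
    show (if posn a (j.1-2) ≤ a then posn a (j.1-2) + 1 else posn a (j.1-2)) = j.1
    unfold posn
    split <;> split <;> omega

lemma phi_Psi (hm : 1 ≤ m) (y : PresentedGroup (wheelRels m a b)) :
    phiHom m a b hm (Psi m a b hm y) = y := by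
  have h : (phiHom m a b hm).comp (Psi m a b hm) = MonoidHom.id _ := by
    refine PresentedGroup.ext (fun x => ?_)
    rw [MonoidHom.comp_apply, MonoidHom.id_apply, Psi_of, phi_genp]
  calc phiHom m a b hm (Psi m a b hm y) = ((phiHom m a b hm).comp (Psi m a b hm)) y := rfl
    _ = y := by rw [h]; rfl

end Wheel10
section Wheel11
variable (m a b : ℕ)

/-- The conjugated walk. -/
def conjw (p : Fin (a+b+2)) (l : List Step) : List Step :=
  repg p.1 ++ l ++ repi (((wheelData m a b).endpt p l).1)

lemma conjw_closed (p : Fin (a+b+2)) (l : List Step) :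
    (wheelData m a b).endpt (e0 a b) (conjw m a b p l) = e0 a b := by
  unfold conjw
  rw [BrauerData.endpt_append, BrauerData.endpt_append]
  rw [endpt_e0_repg m a b p.1 p.isLt, Fin.eta]
  rw [endpt_repi, cast_mk a b _ (((wheelData m a b).endpt p l).isLt), Fin.eta, sub_self]
  exact (mk_zero_eq a b).symm

lemma assemble (hm : 1 ≤ m) (p p' : Fin (a+b+2)) (s : Step)
    (hstep : (wheelData m a b).stepFun s p = p') (l : List Step)
    (cl : List Step) (hcl : (wheelData m a b).endpt (e0 a b) cl = e0 a b)
    (K : Htp (wheelData m a b) (e0 a b) (cl ++ repg p'.1) (repg p.1 ++ [s])) :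
    mkw m a b _ (cl0 m a b (conjw m a b p' l) (conjw_closed m a b p' l))
      * mkw m a b _ (cl0 m a b cl hcl)
    = mkw m a b _ (cl0 m a b (conjw m a b p (s :: l)) (conjw_closed m a b p (s :: l))) := by
  rw [pi1_mul_mk]
  have hq : (wheelData m a b).endpt p (s :: l) = (wheelData m a b).endpt p' l := by
    show (wheelData m a b).endpt ((wheelData m a b).stepFun s p) l = _
    rw [hstep]
  refine mkw_sound m a b ?_
  show Htp (wheelData m a b) (e0 a b) (cl ++ conjw m a b p' l) (conjw m a b p (s :: l))
  have h1 := htp_post (m := m) (e := e0 a b)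
    (l ++ repi (((wheelData m a b).endpt p' l).1)) K
  refine htp_congr ?_ ?_ h1
  · show (cl ++ repg p'.1) ++ (l ++ repi (((wheelData m a b).endpt p' l).1))
        = cl ++ conjw m a b p' l
    unfold conjw
    simp
  · show (repg p.1 ++ [s]) ++ (l ++ repi (((wheelData m a b).endpt p' l).1))
        = conjw m a b p (s :: l)
    unfold conjw
    rw [hq]
    simp

lemma Psi_cf (hm : 1 ≤ m) (p : Fin (a+b+2)) (s : Step) :
    ∃ (cl : List Step) (hcl : (wheelData m a b).endpt (e0 a b) cl = e0 a b),
      Psi m a b hm (cf m a b p s) = mkw m a b _ (cl0 m a b cl hcl) ∧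
      Htp (wheelData m a b) (e0 a b)
        (cl ++ repg (((wheelData m a b).stepFun s p).1)) (repg p.1 ++ [s]) := by
  have hlt := p.isLt
  cases s with
  | g =>
    by_cases hN : p.1 = a+b+1
    · refine ⟨repg (a+b+2), xwalk_closed m a b, ?_, ?_⟩
      · rw [cf_g_eq, if_pos hN]
        show Psi m a b hm (PresentedGroup.of ⟨0, by omega⟩) = _
        rw [Psi_of]
        exact mkw_congr m a b rfl
      · rw [step_g, val_last_add_one a b p hN]
        refine htp_eq ?_
        show repg (a+b+2) ++ repg 0 = repg p.1 ++ [Step.g]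
        rw [hN, ← repg_succ']
        simp [repg]
    · refine ⟨[], rfl, ?_, ?_⟩
      · rw [cf_g_eq, if_neg hN, map_one, pi1_one]
        exact mkw_congr m a b rfl
      · rw [step_g, val_add_one a b p (by omega)]
        refine htp_eq ?_
        show repg (p.1 + 1) = repg p.1 ++ [Step.g]
        rw [← repg_succ']
  | ginv =>
    by_cases h0 : p.1 = 0
    · refine ⟨repi (a+b+2), ?_, ?_, ?_⟩
      · rw [endpt_repi, natCast_N, sub_zero]
      · rw [cf_ginv_eq, if_pos h0]
        show Psi m a b hm (PresentedGroup.of ⟨0, by omega⟩)⁻¹ = _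
        rw [map_inv, Psi_of]
        rw [show genp m a b ⟨0, by omega⟩ = mkw m a b _ (cl0 m a b (repg (a+b+2))
          (xwalk_closed m a b)) from mkw_congr m a b rfl, pi1_inv_mk]
        refine mkw_congr m a b ?_
        show linv (repg (a+b+2)) = repi (a+b+2)
        exact linv_repg _
      · rw [step_ginv, val_zero_sub_one a b p h0, h0]
        have hc : Htp (wheelData m a b) (e0 a b)
            ([Step.ginv] ++ (repi (a+b+1) ++ repg (a+b+1))) ([Step.ginv] ++ []) :=
          htp_pre [Step.ginv] (cancel_ig m a b _ _)
        refine htp_congr ?_ ?_ hc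
        · show [Step.ginv] ++ (repi (a+b+1) ++ repg (a+b+1)) = repi (a+b+2) ++ repg (a+b+1)
          rw [← List.append_assoc]
          rfl
        · show [Step.ginv] ++ [] = repg 0 ++ [Step.ginv]
          rfl
    · refine ⟨[], rfl, ?_, ?_⟩
      · rw [cf_ginv_eq, if_neg h0, map_one, pi1_one]
        exact mkw_congr m a b rfl
      · rw [step_ginv, val_sub_one a b p (by omega)]
        have hc : Htp (wheelData m a b) (e0 a b)
            (repg (p.1-1) ++ [Step.g, Step.ginv]) (repg (p.1-1) ++ []) :=
          htp_pre (repg (p.1-1)) (Htp.gginv (B := wheelData m a b) _)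
        refine Htp.symm (htp_congr ?_ ?_ hc)
        · show repg (p.1-1) ++ [Step.g, Step.ginv] = repg p.1 ++ [Step.ginv]
          have : repg p.1 = repg (p.1-1) ++ [Step.g] := by
            rw [← repg_succ']
            congr 1
            omega
          rw [this]
          simp
        · simp
  | tau =>
    by_cases h0 : p.1 = 0
    · have hp : p = ⟨0, by omega⟩ := Fin.ext h0
      refine ⟨ywalk a, ywalk_closed m a b, ?_, ?_⟩
      · rw [cf_tau_eq, if_pos h0]
        show Psi m a b hm (PresentedGroup.of ⟨1, by omega⟩) = _
        rw [Psi_of]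
        exact mkw_congr m a b rfl
      · rw [step_tau, hp, tau_zero]
        have hc : Htp (wheelData m a b) (e0 a b)
            ([Step.tau] ++ (repi (a+1) ++ repg (a+1))) ([Step.tau] ++ []) :=
          htp_pre [Step.tau] (cancel_ig m a b _ _)
        refine htp_congr ?_ ?_ hc
        · show [Step.tau] ++ (repi (a+1) ++ repg (a+1))
              = ywalk a ++ repg ((⟨a+1, by omega⟩ : Fin (a+b+2)).1)
          show [Step.tau] ++ (repi (a+1) ++ repg (a+1)) = ywalk a ++ repg (a+1)
          rw [← List.append_assoc]
          rfl
        · show [Step.tau] ++ [] = repg ((⟨0, by omega⟩ : Fin (a+b+2)).1) ++ [Step.tau]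
          rfl
    by_cases h1 : p.1 = a+1
    · have hp : p = ⟨a+1, by omega⟩ := Fin.ext h1
      refine ⟨repg (a+1) ++ [Step.tau], ?_, ?_, ?_⟩
      · rw [BrauerData.endpt_append, endpt_e0_repg m a b (a+1) (by omega)]
        show (wheelData m a b).tau ⟨a+1, by omega⟩ = e0 a b
        rw [tau_a1]
        rfl
      · rw [cf_tau_eq, if_neg h0, if_pos h1]
        show Psi m a b hm (PresentedGroup.of ⟨1, by omega⟩)⁻¹ = _
        rw [map_inv, Psi_of]
        rw [show genp m a b ⟨1, by omega⟩ = mkw m a b _ (cl0 m a b (ywalk a)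
          (ywalk_closed m a b)) from mkw_congr m a b rfl, pi1_inv_mk]
        refine mkw_congr m a b ?_
        show linv (ywalk a) = repg (a+1) ++ [Step.tau]
        show linv (Step.tau :: repi (a+1)) = repg (a+1) ++ [Step.tau]
        rw [linv_cons, linv_repi]
        rfl
      · rw [step_tau]
        have htau : (wheelData m a b).tau p = e0 a b := by
          rw [hp]; exact tau_a1 m a b
        rw [htau]
        refine htp_eq ?_
        show (repg (a+1) ++ [Step.tau]) ++ repg 0 = repg p.1 ++ [Step.tau]
        rw [h1]
        simp [repg]
    · refine ⟨zwalk p.1, zwalk_closed m a b p.1 hlt h0 h1, ?_, ?_⟩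
      · rw [cf_tau_eq, if_neg h0, if_neg h1]
        rw [Psi_of]
        refine mkw_congr m a b ?_
        show genw a b ⟨if p.1 ≤ a then p.1 + 1 else p.1, by split <;> omega⟩ = zwalk p.1
        unfold genw
        have hj0 : (⟨if p.1 ≤ a then p.1 + 1 else p.1, by split <;> omega⟩ : Fin (a+b+2)).1 ≠ 0 := by
          show (if p.1 ≤ a then p.1 + 1 else p.1) ≠ 0
          split <;> omega
        have hj1 : (⟨if p.1 ≤ a then p.1 + 1 else p.1, by split <;> omega⟩ : Fin (a+b+2)).1 ≠ 1 := by
          show (if p.1 ≤ a then p.1 + 1 else p.1) ≠ 1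
          split <;> omega
        rw [if_neg hj0, if_neg hj1]
        congr 1
        show posn a ((if p.1 ≤ a then p.1 + 1 else p.1) - 2) = p.1
        unfold posn
        split <;> split <;> omega
      · rw [step_tau, tau_fix m a b p h0 h1]
        have hc : Htp (wheelData m a b) (e0 a b)
            ((repg p.1 ++ [Step.tau]) ++ (repi p.1 ++ repg p.1))
            ((repg p.1 ++ [Step.tau]) ++ []) :=
          htp_pre (repg p.1 ++ [Step.tau]) (cancel_ig m a b _ _)
        refine htp_congr ?_ ?_ hc
        · show (repg p.1 ++ [Step.tau]) ++ (repi p.1 ++ repg p.1) = zwalk p.1 ++ repg p.1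
          unfold zwalk
          simp
        · simp

lemma main_L (hm : 1 ≤ m) : ∀ (l : List Step) (p : Fin (a+b+2)),
    Psi m a b hm (Phi m a b l p)
      = mkw m a b _ (cl0 m a b (conjw m a b p l) (conjw_closed m a b p l)) := by
  intro l
  induction l with
  | nil =>
    intro p
    rw [Phi_nil, map_one, pi1_one]
    refine mkw_sound m a b (Htp.symm ?_)
    show Htp (wheelData m a b) (e0 a b) (conjw m a b p []) []
    have hc := cancel_gi m a b p.1 (e0 a b)
    refine htp_congr ?_ rfl hc
    show repg p.1 ++ repi p.1 = conjw m a b p []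
    unfold conjw
    have he : (wheelData m a b).endpt p [] = p := rfl
    rw [he]
    simp
  | cons s l ih =>
    intro p
    rw [Phi_cons, map_mul, ih]
    obtain ⟨cl, hcl, hPsi, K⟩ := Psi_cf m a b hm p s
    rw [hPsi]
    exact assemble m a b hm p _ s rfl l cl hcl K

end Wheel11
section Wheel12
variable (m a b : ℕ)

lemma Psi_phi (hm : 1 ≤ m) (x : Pi1 (wheelData m a b) (e0 a b)) :
    Psi m a b hm (phiHom m a b hm x) = x := by
  induction x using Quot.ind with | _ u =>
  have h1 : phiHom m a b hm (Quot.mk _ u) = Phi m a b u.1 (e0 a b) := rfl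
  rw [h1, main_L m a b hm]
  have h2 : conjw m a b (e0 a b) u.1 = u.1 := by
    unfold conjw
    rw [u.2.2]
    show repg 0 ++ u.1 ++ repi 0 = u.1
    simp [repg, repi]
  exact mkw_congr m a b h2

end Wheel12

/-- For the above modified Brauer graph (with `m ≥ 1`), the
fundamental group `Π_m(E, e)` is isomorphic to
`F⟨x,y,z₁,…,z_n⟩ / ⟨xᵐy = yxᵐ, xᵐz_i = z_i xᵐ, z_i² = 1⟩`
(an isomorphism being a multiplicative bijection, where multiplication of homotopy
classes of closed walks is induced by composition of walks). -/
theorem wheel_fundamental_group (m a b : ℕ) (hm : 1 ≤ m) :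
    ∃ φ : Pi1 (wheelData m a b) (⟨0, by omega⟩ : Fin (a + b + 2)) ≃
        PresentedGroup (wheelRels m a b),
      ∀ w v : ClosedWalk (wheelData m a b) (⟨0, by omega⟩ : Fin (a + b + 2)),
        φ (Quot.mk _ (w.comp v)) = φ (Quot.mk _ v) * φ (Quot.mk _ w) := by
  refine ⟨⟨phiHom m a b hm, Psi m a b hm, Psi_phi m a b hm, phi_Psi m a b hm⟩, ?_⟩
  intro w v
  show Phi m a b (w.1 ++ v.1) (e0 a b) = Phi m a b v.1 (e0 a b) * Phi m a b w.1 (e0 a b)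
  rw [Phi_append]
  have hw : (wheelData m a b).endpt (e0 a b) w.1 = e0 a b := w.2.2
  rw [hw]

end FB
end

section
/- Let E = (E, U, τ, d) be a connected Brauer G-set with Nakayama automorphism σ. Then the group ⟨σ⟩ acts freely on E; that is, if σⁿ(e) = e for some half-edge e ∈ E and some integer n, then σⁿ = id_E. -/
namespace FB

section Aux

variable {B : BrauerData} (hB : B.IsBrauer)
include hB

lemma sigma_act (n : ℤ) (x : B.E) : B.sigma (B.act n x) = B.act n (B.sigma x) := by
  unfold BrauerData.sigma
  rw [hB.d_act, ← hB.act_add, ← hB.act_add, add_comm]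

lemma sigma_injective : Function.Injective B.sigma := by
  intro x y hxy
  have hx : B.act (-(B.d x : ℤ)) (B.sigma x) = x := by
    unfold BrauerData.sigma
    rw [← hB.act_add]
    simp [hB.act_zero]
  have hy : B.act (-(B.d y : ℤ)) (B.sigma y) = y := by
    unfold BrauerData.sigma
    rw [← hB.act_add]
    simp [hB.act_zero]
  have hd : B.d x = B.d y := by
    have : B.d (B.sigma x) = B.d (B.sigma y) := by rw [hxy]
    unfold BrauerData.sigma at this
    rwa [hB.d_act, hB.d_act] at this
  rw [← hx, ← hy, hxy, hd]

lemma iterate_sigma_act (n : ℤ) (j : ℕ) (x : B.E) :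
    B.sigma^[j] (B.act n x) = B.act n (B.sigma^[j] x) := by
  induction j with
  | zero => rfl
  | succ j ih =>
    rw [Function.iterate_succ_apply', Function.iterate_succ_apply', ih, sigma_act hB]

lemma iterate_sigma_mem {x : B.E} (hx : x ∈ B.U) (j : ℕ) : B.sigma^[j] x ∈ B.U := by
  induction j with
  | zero => exact hx
  | succ j ih =>
    rw [Function.iterate_succ_apply']
    exact (hB.sigma_mem _).mp ih

lemma iterate_sigma_tau {x : B.E} (hx : x ∈ B.U) (j : ℕ) :
    B.sigma^[j] (B.tau x) = B.tau (B.sigma^[j] x) := by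
  induction j with
  | zero => rfl
  | succ j ih =>
    rw [Function.iterate_succ_apply', Function.iterate_succ_apply', ih,
      ← hB.tau_sigma _ (iterate_sigma_mem hB hx j)]

lemma iterate_sigma_endpt (j : ℕ) :
    ∀ (l : List Step) (x : B.E), B.IsValid x l →
      B.sigma^[j] (B.endpt x l) = B.endpt (B.sigma^[j] x) l := by
  intro l
  induction l with
  | nil => intro x _; rfl
  | cons s l ih =>
    intro x hv
    obtain ⟨h1, h2⟩ := hv
    show B.sigma^[j] (B.endpt (B.stepFun s x) l) = B.endpt (B.stepFun s (B.sigma^[j] x)) l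
    rw [ih _ h2]
    congr 1
    cases s with
    | g => exact iterate_sigma_act hB 1 j x
    | ginv => exact iterate_sigma_act hB (-1) j x
    | tau => exact iterate_sigma_tau hB (h1 rfl).1 j

end Aux

/-- The group `⟨σ⟩` generated by the Nakayama automorphism of a
connected Brauer `G`-set acts freely: if `σ^m(e) = σ^k(e)` for some half-edge `e`
(equivalently `σ^n(e) = e` for the integer `n = m - k`), then `σ^m = σ^k`
(equivalently `σ^n = id`). -/
theorem sigma_acts_freely (B : BrauerData) (hB : B.IsBrauer) (hconn : B.Connected)
    (e : B.E) (m k : ℕ) (h : B.sigma^[m] e = B.sigma^[k] e) :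
    ∀ x : B.E, B.sigma^[m] x = B.sigma^[k] x := by
  have key : ∀ (n : ℕ), B.sigma^[n] e = e → ∀ x : B.E, B.sigma^[n] x = x := by
    intro n hne x
    obtain ⟨l, hv, hl⟩ := hconn e x
    rw [← hl, iterate_sigma_endpt hB n l e hv, hne]
  rcases le_total k m with hkm | hmk
  · obtain ⟨n, rfl⟩ := Nat.exists_eq_add_of_le hkm
    rw [Function.iterate_add_apply] at h
    have hne : B.sigma^[n] e = e := Function.Injective.iterate (sigma_injective hB) k h
    intro x
    rw [Function.iterate_add_apply, key n hne x]
  · obtain ⟨n, rfl⟩ := Nat.exists_eq_add_of_le hmk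
    rw [Function.iterate_add_apply] at h
    have hne : B.sigma^[n] e = e :=
      Function.Injective.iterate (sigma_injective hB) m h.symm
    intro x
    rw [Function.iterate_add_apply, key n hne x]

end FB
end

section
/- Let G be a group, X ⊆ G a subset, N the normal subgroup of G generated by X, H a subgroup of G with N ⊆ H, and I ⊆ G a set containing exactly one element from each right coset of H in G. Then N is the normal subgroup of H generated by the set Y = {b a b⁻¹ : b ∈ I, a ∈ X}. -/
namespace FB

/-- Let `G` be a group, `N` the normal closure in `G` of a subset
`X`, `H` a subgroup with `N ≤ H`, and `I` a set of representatives of the right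
cosets of `H`.  Then `N` is the normal closure in `H` of
`Y = {b a b⁻¹ : b ∈ I, a ∈ X}`. -/
theorem normal_closure_in_subgroup (G : Type) [Group G] (X : Set G) (H : Subgroup G)
    (hXH : Subgroup.normalClosure X ≤ H)
    (I : Set G) (hI : ∀ g : G, ∃! b : G, b ∈ I ∧ b * g⁻¹ ∈ H) :
    Subgroup.map H.subtype
        (Subgroup.normalClosure {h : H | ∃ b ∈ I, ∃ a ∈ X, (h : G) = b * a * b⁻¹}) =
      Subgroup.normalClosure X := by
  set Y : Set H := {h : H | ∃ b ∈ I, ∃ a ∈ X, (h : G) = b * a * b⁻¹} with hY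
  set M := Subgroup.map H.subtype (Subgroup.normalClosure Y) with hM
  have key : ∀ (w a : G), a ∈ X → w * a * w⁻¹ ∈ M := by
    intro w a ha
    obtain ⟨b, ⟨hbI, hbH⟩, -⟩ := hI w
    have haN : a ∈ Subgroup.normalClosure X := Subgroup.subset_normalClosure ha
    have hbab : b * a * b⁻¹ ∈ H :=
      hXH (Subgroup.normalClosure_normal.conj_mem a haN b)
    have hh : w * b⁻¹ ∈ H := by
      have := H.inv_mem hbH
      simpa using this
    rw [hM, Subgroup.mem_map]
    refine ⟨(⟨w * b⁻¹, hh⟩ : ↥H) * ⟨b * a * b⁻¹, hbab⟩ * (⟨w * b⁻¹, hh⟩ : ↥H)⁻¹, ?_, ?_⟩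
    · have hyY : (⟨b * a * b⁻¹, hbab⟩ : ↥H) ∈ Y := ⟨b, hbI, a, ha, rfl⟩
      exact Subgroup.normalClosure_normal.conj_mem _
        (Subgroup.subset_normalClosure hyY) _
    · show ((⟨w * b⁻¹, hh⟩ * ⟨b * a * b⁻¹, hbab⟩ * (⟨w * b⁻¹, hh⟩ : ↥H)⁻¹ : H) : G)
        = w * a * w⁻¹
      push_cast
      group
  have hMnormal : M.Normal := by
    constructor
    intro n hn g
    obtain ⟨m, hm, rfl⟩ := hn
    revert g
    rw [Subgroup.normalClosure] at hm
    induction hm using Subgroup.closure_induction with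
    | mem x hx =>
      obtain ⟨y, hy, hconj⟩ := Group.mem_conjugatesOfSet_iff.mp hx
      obtain ⟨c, hc⟩ := isConj_iff.mp hconj
      obtain ⟨b, hbI, a, ha, hba⟩ := hy
      intro g
      have hx' : (x : G) = ↑c * b * a * b⁻¹ * (↑c)⁻¹ := by
        rw [← hc]
        push_cast [hba]
        group
      have heq : g * (H.subtype x) * g⁻¹
          = (g * (↑c * b)) * a * (g * (↑c * b))⁻¹ := by
        simp only [Subgroup.coe_subtype, hx']
        group
      rw [heq]
      exact key (g * (↑c * b)) a ha
    | one =>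
      intro g
      simpa using M.one_mem
    | mul x y hx hy ihx ihy =>
      intro g
      have heq : (g * (H.subtype (x * y)) * g⁻¹) =
          (g * H.subtype x * g⁻¹) * (g * H.subtype y * g⁻¹) := by
        simp only [Subgroup.coe_subtype]
        push_cast
        group
      rw [heq]
      exact M.mul_mem (ihx g) (ihy g)
    | inv x hx ihx =>
      intro g
      have heq : (g * (H.subtype x⁻¹) * g⁻¹) = (g * H.subtype x * g⁻¹)⁻¹ := by
        simp only [Subgroup.coe_subtype]
        push_cast
        group
      rw [heq]
      exact M.inv_mem (ihx g)
  refine le_antisymm ?_ ?_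
  · rw [Subgroup.map_le_iff_le_comap]
    refine Subgroup.normalClosure_le_normal ?_
    rintro y ⟨b, hbI, a, ha, hba⟩
    show y ∈ Subgroup.comap H.subtype (Subgroup.normalClosure X)
    simp only [Subgroup.mem_comap, Subgroup.coe_subtype, hba]
    exact Subgroup.normalClosure_normal.conj_mem a (Subgroup.subset_normalClosure ha) b
  · refine Subgroup.normalClosure_le_normal ?_
    intro a ha
    have := key 1 a ha
    simpa using this

end FB
end
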